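/- arXiv:0811.2719 — 11 statements merged into one kernel-verified Lean document; each statement's English description precedes it below -/
import Mathlib

section
/- Let V be a finite-dimensional complex vector space and let 𝔤 ⊆ End(V) be a Lie subalgebra. Then the subspace L(𝓡̄(𝔤)) := span_ℂ{R(x,y) : R ∈ 𝓡̄(𝔤), x, y ∈ V} is a Lie ideal of 𝔤, i.e. [A, L(𝓡̄(𝔤))] ⊆ L(𝓡̄(𝔤)) for every A ∈ 𝔤. -/
/-- A skew-curvature tensor of type `h` (for `h` a subspace of endomorphisms of `V`):
a symmetric bilinear map `R : V × V → End(V)` taking values in `h` and satisfying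
the Bianchi identity `R(x,y)z + R(y,z)x + R(z,x)y = 0`. -/
def IsSkewCurv {V : Type*} [AddCommGroup V] [Module ℂ V]
    (h : Submodule ℂ (Module.End ℂ V)) (R : V →ₗ[ℂ] V →ₗ[ℂ] Module.End ℂ V) : Prop :=
  (∀ x y, R x y = R y x) ∧ (∀ x y, R x y ∈ h) ∧
  (∀ x y z, R x y z + R y z x + R z x y = 0)

attribute [local instance] LieRing.ofAssociativeRing

/-!
An endomorphism `A` acts on bilinear maps `R : V × V → End V` as a derivation,
`(A • R)(x, y) = [A, R(x, y)] - R(Ax, y) - R(x, Ay)`. This action preserves symmetry and the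
Bianchi identity, and for `A ∈ 𝔤` also the condition of taking values in `𝔤`; so it preserves
`𝓡̄(𝔤)`. Hence `[A, R(x, y)] = (A • R)(x, y) + R(Ax, y) + R(x, Ay)` lies in `L(𝓡̄(𝔤))`.
-/

namespace IsSkewCurv

variable {V : Type*} [AddCommGroup V] [Module ℂ V]

def values (h : Submodule ℂ (Module.End ℂ V)) : Set (Module.End ℂ V) :=
  {T | ∃ R : V →ₗ[ℂ] V →ₗ[ℂ] Module.End ℂ V, IsSkewCurv h R ∧ ∃ x y : V, T = R x y}

theorem apply_mem_span_values {h : Submodule ℂ (Module.End ℂ V)}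
    {R : V →ₗ[ℂ] V →ₗ[ℂ] Module.End ℂ V} (hR : IsSkewCurv h R) (x y : V) :
    R x y ∈ Submodule.span ℂ (values h) :=
  Submodule.subset_span ⟨R, hR, x, y, rfl⟩

theorem span_values_le (h : Submodule ℂ (Module.End ℂ V)) :
    Submodule.span ℂ (values h) ≤ h := by
  rw [Submodule.span_le]
  rintro _ ⟨R, ⟨-, hmem, -⟩, x, y, rfl⟩
  exact hmem x y

def derivAction (A : Module.End ℂ V) (R : V →ₗ[ℂ] V →ₗ[ℂ] Module.End ℂ V) :
    V →ₗ[ℂ] V →ₗ[ℂ] Module.End ℂ V :=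
  R.compr₂ (LieAlgebra.ad ℂ (Module.End ℂ V) A) - R ∘ₗ A - R.compl₂ A

theorem derivAction_apply (A : Module.End ℂ V) (R : V →ₗ[ℂ] V →ₗ[ℂ] Module.End ℂ V) (x y : V) :
    derivAction A R x y = ⁅A, R x y⁆ - R (A x) y - R x (A y) :=
  rfl

theorem lie_apply_eq (A : Module.End ℂ V) (R : V →ₗ[ℂ] V →ₗ[ℂ] Module.End ℂ V) (x y : V) :
    ⁅A, R x y⁆ = derivAction A R x y + R (A x) y + R x (A y) := by
  rw [derivAction_apply]
  abel

theorem derivAction_bianchi (A : Module.End ℂ V) {R : V →ₗ[ℂ] V →ₗ[ℂ] Module.End ℂ V}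
    (hR : ∀ x y z, R x y z + R y z x + R z x y = 0) (x y z : V) :
    derivAction A R x y z + derivAction A R y z x + derivAction A R z x y = 0 := by
  have hA : A (R x y z) + A (R y z x) + A (R z x y) = 0 := by
    rw [← map_add, ← map_add, hR, map_zero]
  simp only [derivAction_apply, LinearMap.sub_apply, Ring.lie_def, Module.End.mul_apply]
  -- the terms containing `A x`, `A y`, `A z` regroup into the Bianchi identity at
  -- `(A x, y, z)`, `(x, A y, z)`, `(x, y, A z)`
  linear_combination (norm := module) hA - hR (A x) y z - hR x (A y) z - hR x y (A z)

theorem isSkewCurv_derivAction {g : LieSubalgebra ℂ (Module.End ℂ V)} {A : Module.End ℂ V}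
    (hA : A ∈ g) {R : V →ₗ[ℂ] V →ₗ[ℂ] Module.End ℂ V} (hR : IsSkewCurv g.toSubmodule R) :
    IsSkewCurv g.toSubmodule (derivAction A R) := by
  obtain ⟨hsymm, hmem, hbianchi⟩ := hR
  refine ⟨fun x y => ?_, fun x y => ?_, derivAction_bianchi A hbianchi⟩
  · rw [derivAction_apply, derivAction_apply, hsymm x y, hsymm (A x) y, hsymm x (A y)]
    abel
  · rw [derivAction_apply]
    exact sub_mem (sub_mem (g.lie_mem hA (hmem x y)) (hmem (A x) y)) (hmem x (A y))

theorem lie_mem_span_values {g : LieSubalgebra ℂ (Module.End ℂ V)} {A : Module.End ℂ V}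
    (hA : A ∈ g) {X : Module.End ℂ V} (hX : X ∈ Submodule.span ℂ (values g.toSubmodule)) :
    ⁅A, X⁆ ∈ Submodule.span ℂ (values g.toSubmodule) := by
  suffices Submodule.span ℂ (values g.toSubmodule) ≤
      (Submodule.span ℂ (values g.toSubmodule)).comap (LieAlgebra.ad ℂ (Module.End ℂ V) A) from
    this hX
  rw [Submodule.span_le]
  rintro _ ⟨R, hR, x, y, rfl⟩
  rw [SetLike.mem_coe, Submodule.mem_comap, LieAlgebra.ad_apply, lie_apply_eq]
  exact add_mem (add_mem ((isSkewCurv_derivAction hA hR).apply_mem_span_values x y)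
    (hR.apply_mem_span_values (A x) y)) (hR.apply_mem_span_values x (A y))

end IsSkewCurv

theorem stmt0_general {V : Type*} [AddCommGroup V] [Module ℂ V]
    (g : LieSubalgebra ℂ (Module.End ℂ V))
    (L : Submodule ℂ (Module.End ℂ V))
    (hL : L = Submodule.span ℂ
      {T | ∃ R : V →ₗ[ℂ] V →ₗ[ℂ] Module.End ℂ V,
        IsSkewCurv g.toSubmodule R ∧ ∃ x y : V, T = R x y}) :
    L ≤ g.toSubmodule ∧ ∀ A ∈ g, ∀ X ∈ L, ⁅A, X⁆ ∈ L := by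
  change L = Submodule.span ℂ (IsSkewCurv.values g.toSubmodule) at hL
  subst hL
  exact ⟨IsSkewCurv.span_values_le _, fun A hA X hX => IsSkewCurv.lie_mem_span_values hA hX⟩

/-- for a Lie subalgebra `𝔤 ⊆ End(V)` of a finite-dimensional complex
vector space `V`, the span `L(𝓡̄(𝔤))` of the images of all skew-curvature tensors of
type `𝔤` is a Lie ideal of `𝔤`. -/
theorem stmt0 {V : Type*} [AddCommGroup V] [Module ℂ V] [FiniteDimensional ℂ V]
    (g : LieSubalgebra ℂ (Module.End ℂ V))
    (L : Submodule ℂ (Module.End ℂ V))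
    (hL : L = Submodule.span ℂ
      {T | ∃ R : V →ₗ[ℂ] V →ₗ[ℂ] Module.End ℂ V,
        IsSkewCurv g.toSubmodule R ∧ ∃ x y : V, T = R x y}) :
    L ≤ g.toSubmodule ∧ ∀ A ∈ g, ∀ X ∈ L, ⁅A, X⁆ ∈ L :=
  stmt0_general g L hL
end

section
/- Let V be a finite-dimensional complex vector space, B a nondegenerate symmetric bilinear form on V, and so(B) = {A ∈ End(V) : B(Ax,y) + B(x,Ay) = 0 for all x,y}. Let 𝔤 ⊆ so(B) be a Lie subalgebra that acts irreducibly on V. Then every skew-curvature tensor of type 𝔤 ⊕ ℂ·id_V takes values in 𝔤, i.e. 𝓡̄(𝔤 ⊕ ℂ·id_V) = 𝓡̄(𝔤). In particular, 𝔤 ⊕ ℂ·id_V is not a skew-Berger algebra. -/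
/-- `h` is a skew-Berger algebra: it is spanned by the images of its
skew-curvature tensors. -/
def IsSkewBerger {V : Type*} [AddCommGroup V] [Module ℂ V]
    (h : Submodule ℂ (Module.End ℂ V)) : Prop :=
  h = Submodule.span ℂ
    {T | ∃ R : V →ₗ[ℂ] V →ₗ[ℂ] Module.End ℂ V,
      IsSkewCurv h R ∧ ∃ x y : V, T = R x y}

attribute [local instance] LieRing.ofAssociativeRing

namespace Submodule

variable {K M : Type*} [DivisionRing K] [AddCommGroup M] [Module K M] {S : Submodule K M}
  {m T : M}

theorem exists_sub_smul_mem_of_mem_sup_span_singleton (hT : T ∈ S ⊔ K ∙ m) :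
    ∃ c : K, T - c • m ∈ S := by
  obtain ⟨A, hA, _, hc, rfl⟩ := mem_sup.mp hT
  obtain ⟨c, rfl⟩ := mem_span_singleton.mp hc
  exact ⟨c, by simpa using hA⟩

theorem eq_of_sub_smul_mem_of_sub_smul_mem (hm : m ∉ S) {c d : K} (hc : T - c • m ∈ S)
    (hd : T - d • m ∈ S) : c = d := by
  by_contra hne
  have hdiff : (c - d) • m ∈ S := by
    have := sub_mem hd hc
    rwa [sub_sub_sub_cancel_left, ← sub_smul] at this
  exact hm ((smul_mem_iff S (sub_ne_zero.mpr hne)).mp hdiff)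

end Submodule

section Pairings

variable {K V : Type*} [Field K] [CharZero K]

/-- Up to the symmetries of `lam` and `b`, the left side is the total symmetrisation of
`lam ⊗ b`, i.e. of `(q x y z w + q x y w z) / 2`, and the cyclic identity kills the total
symmetrisation of `q`. -/
theorem sum_pairings_eq_zero (q : V → V → V → V → K) (lam b : V → V → K)
    (hq_symm : ∀ x y z w, q x y z w = q y x z w)
    (hq_cyclic : ∀ x y z w, q x y z w + q y z x w + q z x y w = 0)
    (hq_skew : ∀ x y z w, q x y z w + q x y w z = 2 * lam x y * b z w) (x y z w : V) :
    lam x y * b z w + lam z w * b x y + lam w y * b z x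
      + lam x w * b z y + lam y z * b x w + lam z x * b y w = 0 := by
  linear_combination (hq_cyclic x y z w + hq_cyclic y z w x + hq_cyclic z x w y
    + hq_cyclic y w x z - hq_skew x y z w - hq_skew y z x w - hq_skew z x y w - hq_skew z w x y
    - hq_skew w y z x - hq_skew x w z y - hq_symm w z x y - hq_symm y w x z - hq_symm w x y z) / 2

theorem eq_zero_of_sum_pairings_eq_zero {lam b : V → V → K}
    (hlam : ∀ x y, lam x y = lam y x) {z : V} (hz : b z z ≠ 0)
    (h : ∀ x y z w, lam x y * b z w + lam z w * b x y + lam w y * b z x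
      + lam x w * b z y + lam y z * b x w + lam z x * b y w = 0) (x y : V) :
    lam x y = 0 := by
  have hzz : lam z z = 0 := by
    refine (mul_eq_zero.mp ?_).resolve_right hz
    linear_combination h z z z z / 6
  have hxz : ∀ x, lam x z = 0 := by
    intro x
    refine (mul_eq_zero.mp ?_).resolve_right hz
    linear_combination h x z z z / 3 - ((2 * b x z + b z x) / 3) * hzz - (b z z / 3) * hlam z x
  refine (mul_eq_zero.mp ?_).resolve_right hz
  linear_combination h x y z z - b x y * hzz - b z x * hlam z y - b z x * hxz y
    - b z y * hxz x - b x z * hxz y - b y z * hlam z x - b y z * hxz x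

end Pairings

section SkewAdjoint

variable {K V : Type*} [Field K] [AddCommGroup V] [Module K V] {B : V →ₗ[K] V →ₗ[K] K}

theorem one_notMem_of_forall_skewAdjoint [NeZero (2 : K)] (hB : B ≠ 0)
    {S : Submodule K (Module.End K V)} (hS : ∀ A ∈ S, ∀ x y, B (A x) y + B x (A y) = 0) :
    (1 : Module.End K V) ∉ S := by
  intro h1
  refine hB (LinearMap.ext₂ fun x y => ?_)
  have h := hS 1 h1 x y
  simp only [Module.End.one_apply] at h
  have h2 : (2 : K) * B x y = 0 := by linear_combination h
  exact (mul_eq_zero.mp h2).resolve_left two_ne_zero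

theorem apply_add_apply_swap_of_skewAdjoint_sub_smul_one (hBsymm : ∀ x y, B x y = B y x)
    {T : Module.End K V} {c : K} (hT : ∀ x y, B ((T - c • 1) x) y + B x ((T - c • 1) y) = 0)
    (z w : V) : B (T z) w + B (T w) z = 2 * c * B z w := by
  have h := hT z w
  simp only [LinearMap.sub_apply, LinearMap.smul_apply, Module.End.one_apply, map_sub, map_smul,
    smul_eq_mul] at h
  linear_combination h + hBsymm (T w) z

end SkewAdjoint

theorem IsSkewCurv.apply_mem_of_sup_span_one {V : Type*} [AddCommGroup V] [Module ℂ V]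
    {B : V →ₗ[ℂ] V →ₗ[ℂ] ℂ} (hBsymm : ∀ x y, B x y = B y x) (hB : B ≠ 0)
    {S : Submodule ℂ (Module.End ℂ V)} (hS : ∀ A ∈ S, ∀ x y, B (A x) y + B x (A y) = 0)
    {R : V →ₗ[ℂ] V →ₗ[ℂ] Module.End ℂ V} (hR : IsSkewCurv (S ⊔ ℂ ∙ 1) R) (x y : V) :
    R x y ∈ S := by
  obtain ⟨hR_symm, hR_mem, hR_bianchi⟩ := hR
  have hone := one_notMem_of_forall_skewAdjoint hB hS
  choose lam hlam using fun x y => Submodule.exists_sub_smul_mem_of_mem_sup_span_singleton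
    (hR_mem x y)
  have hlam_symm (x y : V) : lam x y = lam y x :=
    Submodule.eq_of_sub_smul_mem_of_sub_smul_mem hone (hlam x y) (hR_symm x y ▸ hlam y x)
  have hpairings := sum_pairings_eq_zero (fun x y z w => B (R x y z) w) lam (B · ·)
    (fun x y z w => by rw [hR_symm])
    (fun x y z w => by simpa using congrArg (B · w) (hR_bianchi x y z))
    (fun x y => apply_add_apply_swap_of_skewAdjoint_sub_smul_one hBsymm (hS _ (hlam x y)))
  obtain ⟨z, hz⟩ := LinearMap.BilinForm.exists_bilinForm_self_ne_zero hB
    (LinearMap.isSymm_def.mpr hBsymm)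
  simpa only [eq_zero_of_sum_pairings_eq_zero hlam_symm hz hpairings x y, zero_smul, sub_zero]
    using hlam x y

theorem not_isSkewBerger_of_forall_isSkewCurv_mem {V : Type*} [AddCommGroup V] [Module ℂ V]
    {h S : Submodule ℂ (Module.End ℂ V)}
    (hS : ∀ R, IsSkewCurv h R → ∀ x y, R x y ∈ S) (hh : ¬ h ≤ S) : ¬ IsSkewBerger h := by
  intro hB
  refine hh (hB ▸ Submodule.span_le.mpr ?_)
  rintro T ⟨R, hR, x, y, rfl⟩
  exact hS R hR x y

theorem stmt2_general {V : Type*} [AddCommGroup V] [Module ℂ V]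
    [Nontrivial V]
    (B : V →ₗ[ℂ] V →ₗ[ℂ] ℂ)
    (hBsymm : ∀ x y : V, B x y = B y x)
    (hBnd : ∀ x : V, (∀ y : V, B x y = 0) → x = 0)
    (g : LieSubalgebra ℂ (Module.End ℂ V))
    (hgso : ∀ A ∈ g, ∀ x y : V, B (A x) y + B x (A y) = 0)
    (gext : Submodule ℂ (Module.End ℂ V))
    (hgext : gext = g.toSubmodule ⊔ (ℂ ∙ (1 : Module.End ℂ V))) :
    (∀ R : V →ₗ[ℂ] V →ₗ[ℂ] Module.End ℂ V,
      IsSkewCurv gext R → ∀ x y : V, R x y ∈ g) ∧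
    ¬ IsSkewBerger gext := by
  have hB : B ≠ 0 := by
    obtain ⟨x, hx⟩ := exists_ne (0 : V)
    exact fun h => hx (hBnd x fun y => by simp [h])
  subst hgext
  have hvalues := fun R (hR : IsSkewCurv _ R) => hR.apply_mem_of_sup_span_one hBsymm hB hgso
  refine ⟨hvalues, not_isSkewBerger_of_forall_isSkewCurv_mem hvalues fun hle => ?_⟩
  exact one_notMem_of_forall_skewAdjoint hB hgso
    (hle (Submodule.mem_sup_right (Submodule.mem_span_singleton_self _)))

/-- if `𝔤 ⊆ so(B)` is an irreducible subalgebra of the orthogonal Lie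
algebra of a nondegenerate symmetric form `B` on a finite-dimensional complex vector
space, then every skew-curvature tensor of type `𝔤 ⊕ ℂ·id` takes values in `𝔤`;
in particular `𝔤 ⊕ ℂ·id` is not a skew-Berger algebra. -/
theorem stmt2 {V : Type*} [AddCommGroup V] [Module ℂ V] [FiniteDimensional ℂ V]
    [Nontrivial V]
    (B : V →ₗ[ℂ] V →ₗ[ℂ] ℂ)
    (hBsymm : ∀ x y : V, B x y = B y x)
    (hBnd : ∀ x : V, (∀ y : V, B x y = 0) → x = 0)
    (g : LieSubalgebra ℂ (Module.End ℂ V))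
    (hgso : ∀ A ∈ g, ∀ x y : V, B (A x) y + B x (A y) = 0)
    (hirr : ∀ W : Submodule ℂ V, (∀ A ∈ g, ∀ w ∈ W, A w ∈ W) → W = ⊥ ∨ W = ⊤)
    (gext : Submodule ℂ (Module.End ℂ V))
    (hgext : gext = g.toSubmodule ⊔ (ℂ ∙ (1 : Module.End ℂ V))) :
    (∀ R : V →ₗ[ℂ] V →ₗ[ℂ] Module.End ℂ V,
      IsSkewCurv gext R → ∀ x y : V, R x y ∈ g) ∧
    ¬ IsSkewBerger gext :=
  stmt2_general B hBsymm hBnd g hgso gext hgext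
end

section
/- Let V be a complex vector space of dimension n ≥ 3 and B a nondegenerate symmetric bilinear form on V. Then the orthogonal Lie algebra so(B) = {A ∈ End(V) : B(Ax,y) + B(x,Ay) = 0 for all x,y} is a skew-Berger algebra: so(B) equals the ℂ-span of the set {R(x,y) : R ∈ 𝓡̄(so(B)), x, y ∈ V}. -/
/-- The orthogonal/symplectic Lie algebra of a bilinear form `B`:
`{A ∈ End(V) : B(Ax,y) + B(x,Ay) = 0}`, as a subspace of `End(V)`. -/
def skewAlg {V : Type*} [AddCommGroup V] [Module ℂ V]
    (B : V →ₗ[ℂ] V →ₗ[ℂ] ℂ) : Submodule ℂ (Module.End ℂ V) where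
  carrier := {A | ∀ x y : V, B (A x) y + B x (A y) = 0}
  add_mem' := by
    intro a b ha hb x y
    have h1 := ha x y
    have h2 := hb x y
    simp only [LinearMap.add_apply, map_add] at *
    linear_combination h1 + h2
  zero_mem' := by
    intro x y
    simp
  smul_mem' := by
    intro c a ha x y
    have h := ha x y
    simp only [LinearMap.smul_apply, map_smul, smul_eq_mul] at *
    linear_combination c * h

section SkewBerger

variable {V : Type*} [AddCommGroup V] [Module ℂ V]

def skewCurvSpan (h : Submodule ℂ (Module.End ℂ V)) : Submodule ℂ (Module.End ℂ V) :=
  Submodule.span ℂ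
    {T | ∃ R : V →ₗ[ℂ] V →ₗ[ℂ] Module.End ℂ V, IsSkewCurv h R ∧ ∃ x y : V, T = R x y}

theorem isSkewBerger_iff (h : Submodule ℂ (Module.End ℂ V)) :
    IsSkewBerger h ↔ h = skewCurvSpan h :=
  Iff.rfl

theorem skewCurvSpan_le (h : Submodule ℂ (Module.End ℂ V)) : skewCurvSpan h ≤ h := by
  rw [skewCurvSpan, Submodule.span_le]
  rintro T ⟨R, ⟨-, hR, -⟩, x, y, rfl⟩
  exact hR x y

theorem apply_mem_skewCurvSpan {h : Submodule ℂ (Module.End ℂ V)}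
    {R : V →ₗ[ℂ] V →ₗ[ℂ] Module.End ℂ V} (hR : IsSkewCurv h R) (x y : V) :
    R x y ∈ skewCurvSpan h :=
  Submodule.subset_span ⟨R, hR, x, y, rfl⟩

namespace skewAlg

variable (B : V →ₗ[ℂ] V →ₗ[ℂ] ℂ) (A : Module.End ℂ V)

noncomputable def curv : V →ₗ[ℂ] V →ₗ[ℂ] Module.End ℂ V :=
  LinearMap.mk₂ ℂ
    (fun x y => (B x).smulRight (A y) + (B y).smulRight (A x) - (B (A x)).smulRight y
      - (B (A y)).smulRight x - (2 * B x y) • A)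
    (by intro x x' y; ext z; simp [mul_add, add_smul]; module)
    (by intro c x y; ext z; simp [mul_left_comm, smul_smul]; module)
    (by intro x y y'; ext z; simp [mul_add, add_smul]; module)
    (by intro c x y; ext z; simp [mul_left_comm, smul_smul]; module)

@[simp]
theorem curv_apply (x y z : V) :
    curv B A x y z = B x z • A y + B y z • A x - B (A x) z • y - B (A y) z • x
      - (2 * B x y) • A z := by
  simp [curv]

variable {B A}

theorem curv_comm (hB : ∀ x y, B x y = B y x) (x y : V) : curv B A x y = curv B A y x := by
  ext z
  simp only [curv_apply, hB x y]
  module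

theorem curv_bianchi (hB : ∀ x y, B x y = B y x) (hA : A ∈ skewAlg B) (x y z : V) :
    curv B A x y z + curv B A y z x + curv B A z x y = 0 := by
  have hA : ∀ x y, B (A x) y + B x (A y) = 0 := hA
  simp only [curv_apply]
  match_scalars
  · linear_combination hB x z
  · linear_combination -hB y z
  · linear_combination -hA x z + hB x (A z)
  · linear_combination -hA y z + hB y (A z)
  · linear_combination -hB x y
  · linear_combination -hA y x + hB y (A x)

theorem curv_mem (hB : ∀ x y, B x y = B y x) (hA : A ∈ skewAlg B) (x y : V) :
    curv B A x y ∈ skewAlg B := by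
  have hA : ∀ x y, B (A x) y + B x (A y) = 0 := hA
  intro z w
  simp only [curv_apply, map_add, map_sub, map_smul, LinearMap.add_apply, LinearMap.sub_apply,
    LinearMap.smul_apply, smul_eq_mul]
  linear_combination B (A y) w * hB x z + B (A x) w * hB y z
    + B y w * hB z (A x) + B x w * hB z (A y) - 2 * B x y * hA z w

theorem isSkewCurv_curv (hB : ∀ x y, B x y = B y x) (hA : A ∈ skewAlg B) :
    IsSkewCurv (skewAlg B) (curv B A) :=
  ⟨curv_comm hB, curv_mem hB hA, curv_bianchi hB hA⟩

end skewAlg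

section OrthogonalBasis

variable {ι : Type*} {B : V →ₗ[ℂ] V →ₗ[ℂ] ℂ} {v : Module.Basis ι ℂ V}

theorem apply_basis_eq_repr_mul (hv : B.IsOrthoᵢ v) (i : ι) (z : V) :
    B (v i) z = v.repr z i * B (v i) (v i) := by
  classical
  conv_lhs => rw [← v.linearCombination_repr z, Finsupp.linearCombination_apply, Finsupp.sum]
  rw [map_sum, Finset.sum_eq_single i]
  · simp
  · intro j _ hji
    simp [hv hji.symm]
  · intro hi
    simp [Finsupp.notMem_support_iff.mp hi]

theorem inv_smul_curv_basis_apply (hv : B.IsOrthoᵢ v) (hd : ∀ i, B (v i) (v i) ≠ 0)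
    {A : Module.End ℂ V} (hA : A ∈ skewAlg B) (i : ι) (z : V) :
    (B (v i) (v i))⁻¹ • skewAlg.curv B A (v i) (v i) z
      = (2 : ℂ) • (v.repr z i • A (v i) + v.repr (A z) i • v i - A z) := by
  have hAz : B (A (v i)) z = -(v.repr (A z) i * B (v i) (v i)) := by
    rw [← apply_basis_eq_repr_mul hv]
    linear_combination hA (v i) z
  simp only [skewAlg.curv_apply, apply_basis_eq_repr_mul hv i z, hAz]
  match_scalars <;> field_simp [hd i] <;> ring

theorem sum_inv_smul_curv_basis [Fintype ι] (hv : B.IsOrthoᵢ v) (hd : ∀ i, B (v i) (v i) ≠ 0)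
    {A : Module.End ℂ V} (hA : A ∈ skewAlg B) :
    ∑ i, (B (v i) (v i))⁻¹ • skewAlg.curv B A (v i) (v i)
      = ((4 : ℂ) - 2 * Fintype.card ι) • A := by
  ext z
  simp only [LinearMap.sum_apply, LinearMap.smul_apply, inv_smul_curv_basis_apply hv hd hA,
    ← Finset.smul_sum, Finset.sum_sub_distrib, Finset.sum_add_distrib, Finset.sum_const]
  have hA_sum : ∑ i, v.repr z i • A (v i) = A z := by
    simp only [← map_smul, ← map_sum, v.sum_repr]
  rw [hA_sum, v.sum_repr, Finset.card_univ]
  match_scalars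
  ring

end OrthogonalBasis

theorem skewAlg_le_skewCurvSpan [FiniteDimensional ℂ V] {B : V →ₗ[ℂ] V →ₗ[ℂ] ℂ}
    (hB : ∀ x y, B x y = B y x) (hBnd : B.SeparatingLeft) (hn : Module.finrank ℂ V ≠ 2) :
    skewAlg B ≤ skewCurvSpan (skewAlg B) := by
  intro A hA
  have : Invertible (2 : ℂ) := invertibleOfNonzero two_ne_zero
  obtain ⟨v, hv⟩ := LinearMap.BilinForm.exists_orthogonal_basis (B := B) ⟨hB⟩
  have hd := hv.not_isOrtho_basis_self_of_separatingLeft hBnd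
  have hc : (4 : ℂ) - 2 * Module.finrank ℂ V ≠ 0 := by
    rw [sub_ne_zero]
    exact_mod_cast (by omega : 4 ≠ 2 * Module.finrank ℂ V)
  have hsum := sum_inv_smul_curv_basis hv hd hA
  rw [Fintype.card_fin] at hsum
  rw [← inv_smul_smul₀ hc A, ← hsum]
  exact Submodule.smul_mem _ _ <| Submodule.sum_mem _ fun i _ => Submodule.smul_mem _ _ <|
    apply_mem_skewCurvSpan (skewAlg.isSkewCurv_curv hB hA) _ _

end SkewBerger

/-- for a nondegenerate symmetric bilinear form `B` on a complex vector
space of dimension `n ≥ 3`, the orthogonal Lie algebra `so(B)` is a skew-Berger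
algebra. -/
theorem stmt4 {V : Type*} [AddCommGroup V] [Module ℂ V] [FiniteDimensional ℂ V]
    (n : ℕ) (hn : 3 ≤ n) (hdim : Module.finrank ℂ V = n)
    (B : V →ₗ[ℂ] V →ₗ[ℂ] ℂ)
    (hBsymm : ∀ x y : V, B x y = B y x)
    (hBnd : ∀ x : V, (∀ y : V, B x y = 0) → x = 0) :
    IsSkewBerger (skewAlg B) := by
  rw [isSkewBerger_iff]
  exact le_antisymm (skewAlg_le_skewCurvSpan hBsymm hBnd (by omega)) (skewCurvSpan_le _)
end

section
/- Let n, m ≥ 2 and V = ℂⁿ ⊗ ℂᵐ. For a bilinear form τ : V × V → ℂ define R_τ : V × V → End(V) on decomposable vectors by R_τ(x₁⊗x₂, u₁⊗u₂) = A(x₁⊗x₂, u₁⊗u₂) ⊗ id_{ℂᵐ} + id_{ℂⁿ} ⊗ B(x₁⊗x₂, u₁⊗u₂), where A(x₁⊗x₂, u₁⊗u₂) ∈ End(ℂⁿ) and B(x₁⊗x₂, u₁⊗u₂) ∈ End(ℂᵐ) are given by A(x₁⊗x₂, u₁⊗u₂)v₁ = −τ(x₁⊗x₂, v₁⊗u₂)u₁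 − τ(u₁⊗u₂, v₁⊗x₂)x₁ and B(x₁⊗x₂, u₁⊗u₂)v₂ = τ(x₁⊗x₂, u₁⊗v₂)u₂ + τ(u₁⊗u₂, x₁⊗v₂)x₂, extended bilinearly. Then R_τ is a skew-curvature tensor of type {A⊗id + id⊗B : A ∈ End(ℂⁿ), B ∈ End(ℂᵐ)}, and its trace satisfies tr(R_τ(x₁⊗x₂, u₁⊗u₂)) = (n − m)(τ(x₁⊗x₂, u₁⊗u₂) + τ(u₁⊗u₂, x₁⊗x₂)). -/
/-!
Write `R_τ(x, y) = S(x, y) + S(y, x)` with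
`S(x, u₁ ⊗ u₂)(v₁ ⊗ v₂) = τ(x, u₁ ⊗ v₂) v₁ ⊗ u₂ - τ(x, v₁ ⊗ u₂) u₁ ⊗ v₂`: this is `τ x`
contracted against the tensor obtained from `(u₁ ⊗ u₂) ⊗ (v₁ ⊗ v₂)` by exchanging the `F`-factors
and then antisymmetrising, so it is trilinear by construction and `R_τ` is symmetric for free.
On decomposable vectors `R_τ(x, y)` is `A ⊗ id + id ⊗ B`, hence lies in `gl(E) ⊕ gl(F)`
everywhere, and the twelve terms of the cyclic sum cancel in pairs. Since
`tr (A ⊗ id) = dim F · tr A`, `tr (id ⊗ B) = dim E · tr B` and `tr B = -tr A = τ(x, y) + τ(y, x)`,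
the trace formula follows.
-/

open TensorProduct LinearMap

namespace TensorProduct

variable {R E F M : Type*} [CommSemiring R] [AddCommMonoid E] [Module R E] [AddCommMonoid F]
  [Module R F] [AddCommMonoid M] [Module R M]

theorem apply_mem_of_forall_tmul {f : E ⊗[R] F →ₗ[R] M} {p : Submodule R M}
    (h : ∀ a b, f (a ⊗ₜ b) ∈ p) (x : E ⊗[R] F) : f x ∈ p :=
  x.induction_on (by simp) h fun _ _ hx hy => by simpa using p.add_mem hx hy

noncomputable def swapRight : (E ⊗[R] F) ⊗[R] (E ⊗[R] F) →ₗ[R] (E ⊗[R] F) ⊗[R] (E ⊗[R] F) :=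
  (tensorTensorTensorComm R E E F F).toLinearMap ∘ₗ
    lTensor (E ⊗[R] E) (TensorProduct.comm R F F).toLinearMap ∘ₗ
      (tensorTensorTensorComm R E F E F).toLinearMap

@[simp] lemma swapRight_tmul (u₁ v₁ : E) (u₂ v₂ : F) :
    swapRight ((u₁ ⊗ₜ[R] u₂) ⊗ₜ (v₁ ⊗ₜ v₂)) = (u₁ ⊗ₜ v₂) ⊗ₜ (v₁ ⊗ₜ u₂) := by
  simp [swapRight]

end TensorProduct

namespace SkewCurvature

variable {R E F : Type*} [CommRing R] [AddCommGroup E] [Module R E] [AddCommGroup F] [Module R F]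
  (τ : E ⊗[R] F →ₗ[R] E ⊗[R] F →ₗ[R] R)

noncomputable def halfCurvature : E ⊗[R] F →ₗ[R] E ⊗[R] F →ₗ[R] Module.End R (E ⊗[R] F) :=
  TensorProduct.lcurry (.id R) _ _ _ ∘ₗ TensorProduct.curry
    ((TensorProduct.lid R _).toLinearMap ∘ₗ rTensor _ (lift τ) ∘ₗ
      (TensorProduct.assoc R _ _ _).symm.toLinearMap ∘ₗ
        lTensor _ ((LinearMap.id - (TensorProduct.comm R _ _).toLinearMap) ∘ₗ swapRight))

lemma halfCurvature_apply_tmul_tmul (x : E ⊗[R] F) (u₁ v₁ : E) (u₂ v₂ : F) :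
    halfCurvature τ x (u₁ ⊗ₜ u₂) (v₁ ⊗ₜ v₂)
      = τ x (u₁ ⊗ₜ v₂) • (v₁ ⊗ₜ u₂) - τ x (v₁ ⊗ₜ u₂) • (u₁ ⊗ₜ v₂) := by
  simp [halfCurvature, tmul_sub]

noncomputable def curvature : E ⊗[R] F →ₗ[R] E ⊗[R] F →ₗ[R] Module.End R (E ⊗[R] F) :=
  halfCurvature τ + (halfCurvature τ).flip

lemma curvature_apply (x y : E ⊗[R] F) :
    curvature τ x y = halfCurvature τ x y + halfCurvature τ y x :=
  rfl

lemma curvature_comm (x y : E ⊗[R] F) : curvature τ x y = curvature τ y x := by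
  simp only [curvature_apply, add_comm]

lemma curvature_tmul_apply_tmul (x₁ u₁ v₁ : E) (x₂ u₂ v₂ : F) :
    curvature τ (x₁ ⊗ₜ x₂) (u₁ ⊗ₜ u₂) (v₁ ⊗ₜ v₂)
      = τ (x₁ ⊗ₜ x₂) (u₁ ⊗ₜ v₂) • (v₁ ⊗ₜ u₂) - τ (x₁ ⊗ₜ x₂) (v₁ ⊗ₜ u₂) • (u₁ ⊗ₜ v₂)
        + (τ (u₁ ⊗ₜ u₂) (x₁ ⊗ₜ v₂) • (v₁ ⊗ₜ x₂) - τ (u₁ ⊗ₜ u₂) (v₁ ⊗ₜ x₂) • (x₁ ⊗ₜ v₂)) := by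
  rw [curvature_apply, LinearMap.add_apply, halfCurvature_apply_tmul_tmul,
    halfCurvature_apply_tmul_tmul]

noncomputable def curvatureLeft (x₁ u₁ : E) (x₂ u₂ : F) : Module.End R E :=
  -(τ (x₁ ⊗ₜ x₂) ∘ₗ (mk R E F).flip u₂).smulRight u₁
    - (τ (u₁ ⊗ₜ u₂) ∘ₗ (mk R E F).flip x₂).smulRight x₁

noncomputable def curvatureRight (x₁ u₁ : E) (x₂ u₂ : F) : Module.End R F :=
  (τ (x₁ ⊗ₜ x₂) ∘ₗ mk R E F u₁).smulRight u₂ + (τ (u₁ ⊗ₜ u₂) ∘ₗ mk R E F x₁).smulRight x₂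

@[simp] lemma curvatureLeft_apply (x₁ u₁ v₁ : E) (x₂ u₂ : F) :
    curvatureLeft τ x₁ u₁ x₂ u₂ v₁
      = -τ (x₁ ⊗ₜ x₂) (v₁ ⊗ₜ u₂) • u₁ - τ (u₁ ⊗ₜ u₂) (v₁ ⊗ₜ x₂) • x₁ := by
  simp [curvatureLeft]

@[simp] lemma curvatureRight_apply (x₁ u₁ : E) (x₂ u₂ v₂ : F) :
    curvatureRight τ x₁ u₁ x₂ u₂ v₂
      = τ (x₁ ⊗ₜ x₂) (u₁ ⊗ₜ v₂) • u₂ + τ (u₁ ⊗ₜ u₂) (x₁ ⊗ₜ v₂) • x₂ := by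
  simp [curvatureRight]

lemma curvature_tmul_tmul (x₁ u₁ : E) (x₂ u₂ : F) :
    curvature τ (x₁ ⊗ₜ x₂) (u₁ ⊗ₜ u₂)
      = map (curvatureLeft τ x₁ u₁ x₂ u₂) LinearMap.id
        + map LinearMap.id (curvatureRight τ x₁ u₁ x₂ u₂) := by
  ext v₁ v₂
  simp only [AlgebraTensorModule.curry_apply, restrictScalars_self, curry_apply,
    curvature_tmul_apply_tmul, LinearMap.add_apply, map_tmul, curvatureLeft_apply,
    curvatureRight_apply, id_coe, id_eq, neg_smul, sub_tmul, neg_tmul, tmul_add, tmul_smul,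
    smul_tmul']
  module

lemma curvature_mem_span (x y : E ⊗[R] F) :
    curvature τ x y ∈ Submodule.span R
      {T : Module.End R (E ⊗[R] F) | ∃ (A : Module.End R E) (B : Module.End R F),
        T = map A LinearMap.id + map LinearMap.id B} := by
  refine apply_mem_of_forall_tmul (f := (curvature τ).flip y) (fun x₁ x₂ => ?_) x
  refine apply_mem_of_forall_tmul (f := curvature τ (x₁ ⊗ₜ x₂))
    (fun u₁ u₂ => Submodule.subset_span ?_) y
  exact ⟨_, _, curvature_tmul_tmul τ x₁ u₁ x₂ u₂⟩

lemma curvature_bianchi (x y z : E ⊗[R] F) :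
    curvature τ x y z + curvature τ y z x + curvature τ z x y = 0 := by
  let rotate : (E ⊗[R] F →ₗ[R] Module.End R (E ⊗[R] F)) →ₗ[R]
      E ⊗[R] F →ₗ[R] Module.End R (E ⊗[R] F) := lflip.toLinearMap
  let cyclicSum : E ⊗[R] F →ₗ[R] E ⊗[R] F →ₗ[R] Module.End R (E ⊗[R] F) :=
    curvature τ + (rotate ∘ₗ curvature τ).flip + rotate ∘ₗ (curvature τ).flip
  suffices cyclicSum = 0 from congr($this x y z)
  ext x₁ x₂ y₁ y₂ z₁ z₂
  simp only [cyclicSum, rotate, AlgebraTensorModule.curry_apply, restrictScalars_self,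
    curry_apply, LinearMap.add_apply, coe_comp, LinearEquiv.coe_coe, Function.comp_apply,
    lflip_apply, flip_apply, curvature_tmul_apply_tmul, LinearMap.zero_apply]
  module

lemma trace_curvature_tmul_tmul [Module.Free R E] [Module.Finite R E] [Module.Free R F]
    [Module.Finite R F] (x₁ u₁ : E) (x₂ u₂ : F) :
    trace R _ (curvature τ (x₁ ⊗ₜ x₂) (u₁ ⊗ₜ u₂))
      = ((Module.finrank R E : R) - Module.finrank R F) *
          (τ (x₁ ⊗ₜ x₂) (u₁ ⊗ₜ u₂) + τ (u₁ ⊗ₜ u₂) (x₁ ⊗ₜ x₂)) := by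
  rw [curvature_tmul_tmul, map_add, trace_tensorProduct', trace_tensorProduct', trace_id,
    trace_id, curvatureLeft, curvatureRight]
  simp only [map_sub, map_neg, map_add, trace_smulRight, comp_apply, flip_apply, mk_apply]
  ring

end SkewCurvature

theorem stmt6_general (n m : ℕ)
    (τ : ((Fin n → ℂ) ⊗[ℂ] (Fin m → ℂ)) →ₗ[ℂ] ((Fin n → ℂ) ⊗[ℂ] (Fin m → ℂ)) →ₗ[ℂ] ℂ) :
    ∃ R : ((Fin n → ℂ) ⊗[ℂ] (Fin m → ℂ)) →ₗ[ℂ] ((Fin n → ℂ) ⊗[ℂ] (Fin m → ℂ)) →ₗ[ℂ]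
        Module.End ℂ ((Fin n → ℂ) ⊗[ℂ] (Fin m → ℂ)),
      -- `R` is given on decomposable vectors by the formula defining `R_τ`
      (∀ (x₁ u₁ : Fin n → ℂ) (x₂ u₂ : Fin m → ℂ),
        ∃ A : Module.End ℂ (Fin n → ℂ), ∃ B : Module.End ℂ (Fin m → ℂ),
          R (x₁ ⊗ₜ[ℂ] x₂) (u₁ ⊗ₜ[ℂ] u₂)
            = TensorProduct.map A LinearMap.id + TensorProduct.map LinearMap.id B ∧
          (∀ v₁ : Fin n → ℂ, A v₁
            = -(τ (x₁ ⊗ₜ[ℂ] x₂) (v₁ ⊗ₜ[ℂ] u₂)) • u₁ - (τ (u₁ ⊗ₜ[ℂ] u₂) (v₁ ⊗ₜ[ℂ] x₂)) • x₁) ∧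
          (∀ v₂ : Fin m → ℂ, B v₂
            = (τ (x₁ ⊗ₜ[ℂ] x₂) (u₁ ⊗ₜ[ℂ] v₂)) • u₂ + (τ (u₁ ⊗ₜ[ℂ] u₂) (x₁ ⊗ₜ[ℂ] v₂)) • x₂)) ∧
      -- `R` is symmetric
      (∀ x y, R x y = R y x) ∧
      -- `R` takes values in `{A⊗id + id⊗B : A ∈ End(ℂⁿ), B ∈ End(ℂᵐ)}`
      (∀ x y, R x y ∈ Submodule.span ℂ
        {T : Module.End ℂ ((Fin n → ℂ) ⊗[ℂ] (Fin m → ℂ)) |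
          ∃ A : Module.End ℂ (Fin n → ℂ), ∃ B : Module.End ℂ (Fin m → ℂ),
            T = TensorProduct.map A LinearMap.id + TensorProduct.map LinearMap.id B}) ∧
      -- the Bianchi identity
      (∀ x y z, R x y z + R y z x + R z x y = 0) ∧
      -- the trace identity
      (∀ (x₁ u₁ : Fin n → ℂ) (x₂ u₂ : Fin m → ℂ),
        LinearMap.trace ℂ _ (R (x₁ ⊗ₜ[ℂ] x₂) (u₁ ⊗ₜ[ℂ] u₂))
          = ((n : ℂ) - (m : ℂ)) *
            (τ (x₁ ⊗ₜ[ℂ] x₂) (u₁ ⊗ₜ[ℂ] u₂) + τ (u₁ ⊗ₜ[ℂ] u₂) (x₁ ⊗ₜ[ℂ] x₂))) := by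
  refine ⟨SkewCurvature.curvature τ, fun x₁ u₁ x₂ u₂ => ?_, SkewCurvature.curvature_comm τ,
    SkewCurvature.curvature_mem_span τ, SkewCurvature.curvature_bianchi τ, fun x₁ u₁ x₂ u₂ => ?_⟩
  · exact ⟨_, _, SkewCurvature.curvature_tmul_tmul τ x₁ u₁ x₂ u₂,
      (SkewCurvature.curvatureLeft_apply τ x₁ u₁ · x₂ u₂),
      SkewCurvature.curvatureRight_apply τ x₁ u₁ x₂ u₂⟩
  · simpa using SkewCurvature.trace_curvature_tmul_tmul τ x₁ u₁ x₂ u₂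

/-- for `V = ℂⁿ ⊗ ℂᵐ` (`n, m ≥ 2`) and a bilinear form `τ` on `V`,
the bilinear extension `R_τ` of the formula on decomposable vectors is a
skew-curvature tensor of type `gl(n,ℂ) ⊕ gl(m,ℂ) = {A⊗id + id⊗B}`, and
`tr(R_τ(x₁⊗x₂, u₁⊗u₂)) = (n−m)(τ(x₁⊗x₂, u₁⊗u₂) + τ(u₁⊗u₂, x₁⊗x₂))`. -/
theorem stmt6 (n m : ℕ) (hn : 2 ≤ n) (hm : 2 ≤ m)
    (τ : ((Fin n → ℂ) ⊗[ℂ] (Fin m → ℂ)) →ₗ[ℂ] ((Fin n → ℂ) ⊗[ℂ] (Fin m → ℂ)) →ₗ[ℂ] ℂ) :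
    ∃ R : ((Fin n → ℂ) ⊗[ℂ] (Fin m → ℂ)) →ₗ[ℂ] ((Fin n → ℂ) ⊗[ℂ] (Fin m → ℂ)) →ₗ[ℂ]
        Module.End ℂ ((Fin n → ℂ) ⊗[ℂ] (Fin m → ℂ)),
      -- `R` is given on decomposable vectors by the formula defining `R_τ`
      (∀ (x₁ u₁ : Fin n → ℂ) (x₂ u₂ : Fin m → ℂ),
        ∃ A : Module.End ℂ (Fin n → ℂ), ∃ B : Module.End ℂ (Fin m → ℂ),
          R (x₁ ⊗ₜ[ℂ] x₂) (u₁ ⊗ₜ[ℂ] u₂)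
            = TensorProduct.map A LinearMap.id + TensorProduct.map LinearMap.id B ∧
          (∀ v₁ : Fin n → ℂ, A v₁
            = -(τ (x₁ ⊗ₜ[ℂ] x₂) (v₁ ⊗ₜ[ℂ] u₂)) • u₁ - (τ (u₁ ⊗ₜ[ℂ] u₂) (v₁ ⊗ₜ[ℂ] x₂)) • x₁) ∧
          (∀ v₂ : Fin m → ℂ, B v₂
            = (τ (x₁ ⊗ₜ[ℂ] x₂) (u₁ ⊗ₜ[ℂ] v₂)) • u₂ + (τ (u₁ ⊗ₜ[ℂ] u₂) (x₁ ⊗ₜ[ℂ] v₂)) • x₂)) ∧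
      -- `R` is symmetric
      (∀ x y, R x y = R y x) ∧
      -- `R` takes values in `{A⊗id + id⊗B : A ∈ End(ℂⁿ), B ∈ End(ℂᵐ)}`
      (∀ x y, R x y ∈ Submodule.span ℂ
        {T : Module.End ℂ ((Fin n → ℂ) ⊗[ℂ] (Fin m → ℂ)) |
          ∃ A : Module.End ℂ (Fin n → ℂ), ∃ B : Module.End ℂ (Fin m → ℂ),
            T = TensorProduct.map A LinearMap.id + TensorProduct.map LinearMap.id B}) ∧
      -- the Bianchi identity
      (∀ x y z, R x y z + R y z x + R z x y = 0) ∧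
      -- the trace identity
      (∀ (x₁ u₁ : Fin n → ℂ) (x₂ u₂ : Fin m → ℂ),
        LinearMap.trace ℂ _ (R (x₁ ⊗ₜ[ℂ] x₂) (u₁ ⊗ₜ[ℂ] u₂))
          = ((n : ℂ) - (m : ℂ)) *
            (τ (x₁ ⊗ₜ[ℂ] x₂) (u₁ ⊗ₜ[ℂ] u₂) + τ (u₁ ⊗ₜ[ℂ] u₂) (x₁ ⊗ₜ[ℂ] x₂))) :=
  stmt6_general n m τ
end

section
/- Let n ≥ 6 and let V = {S ∈ Matₙ(ℂ) : Sᵀ = −S} be the space of skew-symmetric n×n complex matrices, with the representation ρ : Matₙ(ℂ) → End(V) given by ρ(A)S = AS + S·Aᵀ (the natural action of gl(n,ℂ) on Λ²ℂⁿ). If R : V × V → Matₙ(ℂ) is a symmetric bilinear map such that ρ(R(X,Y))Z + ρ(R(Y,Z))X + ρ(R(Z,X))Y = 0 for all X, Y, Z ∈ V, then tr(R(X,Y)) = 0 for all X, Y ∈ V. (Equivalently, 𝓡̄(gl(n,ℂ) acting on Λ²ℂⁿ) = 𝓡̄(sl(n,ℂ)).) -/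
/-!
The form `tr R(X, Y)` is bilinear, so it suffices to evaluate it on the basis vectors
`F_ab = E_ab - E_ba`. The `(e, f)` entry of the Bianchi identity for `(F_ef, Y, Z)` reads
`R(Y, Z)_ee + R(Y, Z)_ff = 0` as soon as the rows `e, f` of `Y` and `Z` vanish; so if the rows of
`Y, Z` are supported in a set `s` missing at least two indices, the diagonal of `R(Y, Z)` off `s`
sums to zero. For basis vectors, `s` can be chosen with at most four elements (this is where
`n ≥ 6` enters), and a few more entries of the Bianchi identity show that the diagonal of
`R(Y, Z)` on `s` sums to zero as well.
-/

open Matrix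
/-- The space `Λ²ℂⁿ` of skew-symmetric `n × n` complex matrices. -/
noncomputable def skewMat (n : ℕ) : Submodule ℂ (Matrix (Fin n) (Fin n) ℂ) where
  carrier := {S | Sᵀ = -S}
  add_mem' := by
    intro a b ha hb
    simp only [Set.mem_setOf_eq] at *
    rw [Matrix.transpose_add, ha, hb, neg_add]
  zero_mem' := by
    simp only [Set.mem_setOf_eq, Matrix.transpose_zero, neg_zero]
  smul_mem' := by
    intro c a ha
    simp only [Set.mem_setOf_eq] at *
    rw [Matrix.transpose_smul, ha, smul_neg]

open Finset

section Action

variable {m α : Type*} [Fintype m] [CommRing α]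

def rho (A S : Matrix m m α) : Matrix m m α := A * S + S * Aᵀ

lemma rho_single_sub_single_apply [DecidableEq m] (A : Matrix m m α) (u v p q : m) :
    rho A (single u v 1 - single v u 1) p q =
      (if v = q then A p u else 0) - (if u = q then A p v else 0)
        + ((if u = p then A q v else 0) - (if v = p then A q u else 0)) := by
  simp [rho, mul_sub, sub_mul, Matrix.mul_apply, single_apply, ite_and]

def RowsSupportedIn (S : Matrix m m α) (s : Finset m) : Prop := ∀ i ∉ s, ∀ j, S i j = 0

lemma rho_apply_eq_zero_of_rowsSupportedIn (A : Matrix m m α) {S : Matrix m m α} (hS : Sᵀ = -S)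
    {s : Finset m} (hSs : RowsSupportedIn S s) {p q : m} (hp : p ∉ s) (hq : q ∉ s) :
    rho A S p q = 0 := by
  have hcol : ∀ k, S k q = 0 := fun k => by
    rw [← neg_eq_zero, ← neg_apply, ← hS, transpose_apply, hSs q hq]
  simp [rho, Matrix.mul_apply, hSs p hp, hcol]

end Action

lemma sum_eq_zero_of_pairwise_add_eq_zero {ι K : Type*} [CommRing K] [NoZeroDivisors K]
    [NeZero (2 : K)] {T : Finset ι} (hT : 2 ≤ #T) (d : ι → K)
    (h : ∀ i ∈ T, ∀ j ∈ T, i ≠ j → d i + d j = 0) : ∑ i ∈ T, d i = 0 := by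
  classical
  obtain ⟨e, he, f, hf, hef⟩ := one_lt_card.mp hT
  have hrest : ∀ i ∈ T \ {e, f}, d i = 0 := by
    intro i hi
    simp only [mem_sdiff, mem_insert, mem_singleton, not_or] at hi
    obtain ⟨hiT, hie, hif⟩ := hi
    have h2 : 2 * d i = 0 := by
      linear_combination h i hiT e he hie + h i hiT f hf hif - h e he f hf hef
    exact (mul_eq_zero.mp h2).resolve_left two_ne_zero
  have hsub : {e, f} ⊆ T := insert_subset he (singleton_subset_iff.mpr hf)
  rw [← sum_sdiff hsub, sum_eq_zero hrest, sum_pair hef, zero_add, h e he f hf hef]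

variable {n : ℕ}

noncomputable def skewBasis (u v : Fin n) : skewMat n :=
  ⟨single u v 1 - single v u 1, by
    change (single u v 1 - single v u 1)ᵀ = -(single u v 1 - single v u 1)
    rw [transpose_sub, transpose_single, transpose_single, neg_sub]⟩

@[simp]
lemma coe_skewBasis (u v : Fin n) :
    (skewBasis u v : Matrix (Fin n) (Fin n) ℂ) = single u v 1 - single v u 1 := rfl

lemma skewBasis_swap (u v : Fin n) : skewBasis v u = -skewBasis u v :=
  Subtype.ext (neg_sub _ _).symm

lemma skewBasis_self (u : Fin n) : skewBasis u u = 0 :=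
  Subtype.ext (sub_self _)

lemma rowsSupportedIn_skewBasis {s : Finset (Fin n)} {u v : Fin n} (hu : u ∈ s) (hv : v ∈ s) :
    RowsSupportedIn (skewBasis u v : Matrix (Fin n) (Fin n) ℂ) s := by
  intro i hi j
  have hui : u ≠ i := fun h => hi (h ▸ hu)
  have hvi : v ≠ i := fun h => hi (h ▸ hv)
  simp [hui, hvi]

lemma sum_smul_skewBasis (S : skewMat n) :
    ∑ i, ∑ j, ((S : Matrix (Fin n) (Fin n) ℂ) i j / 2) • skewBasis i j = S := by
  have hS : ∀ i j, (S : Matrix (Fin n) (Fin n) ℂ) j i = -(S : Matrix (Fin n) (Fin n) ℂ) i j :=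
    fun i j => congrFun (congrFun S.2 i) j
  apply Subtype.ext
  ext p q
  simp only [AddSubmonoidClass.coe_finsetSum, SetLike.val_smul, coe_skewBasis, Matrix.sum_apply,
    Matrix.smul_apply, Matrix.sub_apply, single_apply, ite_and, smul_eq_mul, mul_sub, mul_ite,
    mul_one, mul_zero, sum_sub_distrib, sum_ite_irrel, sum_ite_eq', mem_univ, if_true,
    sum_const_zero, hS p q]
  ring

lemma two_le_card_compl (hn : 6 ≤ n) {s : Finset (Fin n)} (hs : #s ≤ 4) : 2 ≤ #sᶜ := by
  rw [card_compl, Fintype.card_fin]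
  omega

def SatisfiesBianchi (R : skewMat n →ₗ[ℂ] skewMat n →ₗ[ℂ] Matrix (Fin n) (Fin n) ℂ) : Prop :=
  ∀ X Y Z : skewMat n, rho (R X Y) Z + rho (R Y Z) X + rho (R Z X) Y = 0

namespace SatisfiesBianchi

variable {R : skewMat n →ₗ[ℂ] skewMat n →ₗ[ℂ] Matrix (Fin n) (Fin n) ℂ} (hB : SatisfiesBianchi R)
include hB

lemma apply (X Y Z : skewMat n) (p q : Fin n) :
    rho (R X Y) Z p q + rho (R Y Z) X p q + rho (R Z X) Y p q = 0 := by
  simpa using congrFun (congrFun (hB X Y Z) p) q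

lemma diag_add_diag_eq_zero {Y Z : skewMat n} {s : Finset (Fin n)}
    (hY : RowsSupportedIn (Y : Matrix (Fin n) (Fin n) ℂ) s)
    (hZ : RowsSupportedIn (Z : Matrix (Fin n) (Fin n) ℂ) s)
    {e f : Fin n} (he : e ∉ s) (hf : f ∉ s) (hef : e ≠ f) :
    R Y Z e e + R Y Z f f = 0 := by
  have h := hB.apply (skewBasis e f) Y Z e f
  rw [rho_apply_eq_zero_of_rowsSupportedIn _ Z.2 hZ he hf,
    rho_apply_eq_zero_of_rowsSupportedIn _ Y.2 hY he hf, coe_skewBasis,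
    rho_single_sub_single_apply] at h
  simpa [hef, hef.symm] using h

lemma trace_eq_sum_diag {Y Z : skewMat n} {s : Finset (Fin n)}
    (hY : RowsSupportedIn (Y : Matrix (Fin n) (Fin n) ℂ) s)
    (hZ : RowsSupportedIn (Z : Matrix (Fin n) (Fin n) ℂ) s) (hs : 2 ≤ #sᶜ) :
    (R Y Z).trace = ∑ i ∈ s, R Y Z i i := by
  have hcompl : ∑ i ∈ sᶜ, R Y Z i i = 0 :=
    sum_eq_zero_of_pairwise_add_eq_zero hs _ fun e he f hf hef =>
      hB.diag_add_diag_eq_zero hY hZ (mem_compl.mp he) (mem_compl.mp hf) hef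
  rw [Matrix.trace, ← sum_compl_add_sum s]
  exact (add_eq_right.mpr hcompl)

lemma diag_add_diag_skewBasis_self {e f : Fin n} (hef : e ≠ f) :
    R (skewBasis e f) (skewBasis e f) e e + R (skewBasis e f) (skewBasis e f) f f = 0 := by
  have h := hB.apply (skewBasis e f) (skewBasis e f) (skewBasis e f) e f
  simp only [coe_skewBasis, rho_single_sub_single_apply, hef, hef.symm, if_true, if_false,
    sub_zero] at h
  linear_combination h / 3

lemma diag_add_diag_skewBasis_left (hsymm : ∀ X Y : skewMat n, R X Y = R Y X) {Z : skewMat n}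
    {s : Finset (Fin n)} (hZ : RowsSupportedIn (Z : Matrix (Fin n) (Fin n) ℂ) s)
    {e f : Fin n} (he : e ∉ s) (hf : f ∉ s) (hef : e ≠ f) :
    R (skewBasis e f) Z e e + R (skewBasis e f) Z f f = 0 := by
  have h := hB.apply (skewBasis e f) (skewBasis e f) Z e f
  rw [rho_apply_eq_zero_of_rowsSupportedIn _ Z.2 hZ he hf, hsymm Z] at h
  simp only [coe_skewBasis, rho_single_sub_single_apply] at h
  simpa [hef, hef.symm] using h

lemma diag_sum_skewBasis_share (hsymm : ∀ X Y : skewMat n, R X Y = R Y X) {a b c g : Fin n}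
    (hab : a ≠ b) (hac : a ≠ c) (hag : a ≠ g) (hbc : b ≠ c) (hbg : b ≠ g) (hcg : c ≠ g) :
    R (skewBasis a b) (skewBasis a c) a a + R (skewBasis a b) (skewBasis a c) b b
      + R (skewBasis a b) (skewBasis a c) c c + R (skewBasis a b) (skewBasis a c) g g = 0 := by
  have h₁ := hB.apply (skewBasis a b) (skewBasis a b) (skewBasis a c) a b
  have h₂ := hB.apply (skewBasis a b) (skewBasis a b) (skewBasis c g) b g
  have h₃ := hB.apply (skewBasis a b) (skewBasis a c) (skewBasis c g) c g
  rw [hsymm (skewBasis a c)] at h₁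
  rw [hsymm (skewBasis c g)] at h₂ h₃
  simp only [coe_skewBasis, rho_single_sub_single_apply, hab, hac, hag, hbc, hbg, hcg, hab.symm,
    hac.symm, hbc.symm, hbg.symm, hcg.symm, if_true, if_false, sub_self, sub_zero, zero_sub,
    add_zero, zero_add] at h₁ h₂ h₃
  -- With `F_uv = skewBasis u v`, `A = R(F_ab, F_ac)`, `B = R(F_ab, F_ab)`, `C = R(F_ab, F_cg)`:
  -- h₁ : B_bc + 2 (A_aa + A_bb) = 0,  h₂ : B_bc - 2 C_ga = 0,  h₃ : A_cc + A_gg - C_ga = 0.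
  linear_combination h₁ / 2 - h₂ / 2 + h₃

variable (hn : 6 ≤ n)
include hn

lemma trace_skewBasis_self {a b : Fin n} (hab : a ≠ b) :
    (R (skewBasis a b) (skewBasis a b)).trace = 0 := by
  rw [hB.trace_eq_sum_diag (s := {a, b}) (rowsSupportedIn_skewBasis (by simp) (by simp))
    (rowsSupportedIn_skewBasis (by simp) (by simp))
    (two_le_card_compl hn (card_le_two.trans (by norm_num))), sum_pair hab]
  exact hB.diag_add_diag_skewBasis_self hab

variable (hsymm : ∀ X Y : skewMat n, R X Y = R Y X)
include hsymm

lemma trace_skewBasis_share {a b c : Fin n} (hab : a ≠ b) (hac : a ≠ c) (hbc : b ≠ c) :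
    (R (skewBasis a b) (skewBasis a c)).trace = 0 := by
  obtain ⟨g, hg⟩ : ({a, b, c}ᶜ : Finset (Fin n)).Nonempty := by
    rw [← card_pos]
    have := two_le_card_compl hn ((card_le_three (a := a) (b := b) (c := c)).trans (by norm_num))
    omega
  simp only [mem_compl, mem_insert, mem_singleton, not_or] at hg
  obtain ⟨hga, hgb, hgc⟩ := hg
  rw [hB.trace_eq_sum_diag (s := {a, b, c, g}) (rowsSupportedIn_skewBasis (by simp) (by simp))
    (rowsSupportedIn_skewBasis (by simp) (by simp)) (two_le_card_compl hn card_le_four),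
    sum_insert (by simp [hab, hac, Ne.symm hga]), sum_insert (by simp [hbc, Ne.symm hgb]),
    sum_pair (Ne.symm hgc), ← add_assoc, ← add_assoc]
  exact hB.diag_sum_skewBasis_share hsymm hab hac (Ne.symm hga) hbc (Ne.symm hgb) (Ne.symm hgc)

lemma trace_skewBasis_disjoint {a b c d : Fin n} (hab : a ≠ b) (hac : a ≠ c) (had : a ≠ d)
    (hbc : b ≠ c) (hbd : b ≠ d) (hcd : c ≠ d) :
    (R (skewBasis a b) (skewBasis c d)).trace = 0 := by
  have hab_diag := hB.diag_add_diag_skewBasis_left hsymm (Z := skewBasis c d) (s := {c, d})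
    (rowsSupportedIn_skewBasis (by simp) (by simp)) (by simp [hac, had]) (by simp [hbc, hbd]) hab
  have hcd_diag := hB.diag_add_diag_skewBasis_left hsymm (Z := skewBasis a b) (s := {a, b})
    (rowsSupportedIn_skewBasis (by simp) (by simp)) (by simp [hac.symm, hbc.symm])
    (by simp [had.symm, hbd.symm]) hcd
  rw [hsymm] at hcd_diag
  rw [hB.trace_eq_sum_diag (s := {a, b, c, d}) (rowsSupportedIn_skewBasis (by simp) (by simp))
    (rowsSupportedIn_skewBasis (by simp) (by simp)) (two_le_card_compl hn card_le_four),
    sum_insert (by simp [hab, hac, had]), sum_insert (by simp [hbc, hbd]), sum_pair hcd]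
  linear_combination hab_diag + hcd_diag

lemma trace_skewBasis (i j k l : Fin n) : (R (skewBasis i j) (skewBasis k l)).trace = 0 := by
  rcases eq_or_ne i j with rfl | hij
  · simp [skewBasis_self]
  rcases eq_or_ne k l with rfl | hkl
  · simp [skewBasis_self]
  rcases eq_or_ne i k with rfl | hik
  · rcases eq_or_ne j l with rfl | hjl
    · exact hB.trace_skewBasis_self hn hij
    · exact hB.trace_skewBasis_share hn hsymm hij hkl hjl
  rcases eq_or_ne i l with rfl | hil
  · rw [skewBasis_swap i k, map_neg, trace_neg, neg_eq_zero]
    rcases eq_or_ne j k with rfl | hjk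
    · exact hB.trace_skewBasis_self hn hij
    · exact hB.trace_skewBasis_share hn hsymm hij hik hjk
  rcases eq_or_ne j k with rfl | hjk
  · rw [skewBasis_swap j i, map_neg, LinearMap.neg_apply, trace_neg, neg_eq_zero]
    exact hB.trace_skewBasis_share hn hsymm hij.symm hkl hil
  rcases eq_or_ne j l with rfl | hjl
  · rw [skewBasis_swap j i, skewBasis_swap j k, map_neg, map_neg, LinearMap.neg_apply, neg_neg]
    exact hB.trace_skewBasis_share hn hsymm hij.symm hkl.symm hik
  exact hB.trace_skewBasis_disjoint hn hsymm hij hik hil hjk hjl hkl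

end SatisfiesBianchi

/-- for `n ≥ 6`, any skew-curvature tensor for the natural action of
`gl(n,ℂ)` on `Λ²ℂⁿ` (skew-symmetric matrices, `ρ(A)S = AS + SAᵀ`) is traceless,
i.e. `𝓡̄(gl(n,ℂ)) = 𝓡̄(sl(n,ℂ))` for this representation. -/
theorem stmt7 (n : ℕ) (hn : 6 ≤ n)
    (R : skewMat n →ₗ[ℂ] skewMat n →ₗ[ℂ] Matrix (Fin n) (Fin n) ℂ)
    (hsymm : ∀ X Y : skewMat n, R X Y = R Y X)
    (hBianchi : ∀ X Y Z : skewMat n,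
      (R X Y * (Z : Matrix (Fin n) (Fin n) ℂ) + (Z : Matrix (Fin n) (Fin n) ℂ) * (R X Y)ᵀ)
      + (R Y Z * (X : Matrix (Fin n) (Fin n) ℂ) + (X : Matrix (Fin n) (Fin n) ℂ) * (R Y Z)ᵀ)
      + (R Z X * (Y : Matrix (Fin n) (Fin n) ℂ) + (Y : Matrix (Fin n) (Fin n) ℂ) * (R Z X)ᵀ)
      = 0) :
    ∀ X Y : skewMat n, (R X Y).trace = 0 := by
  have hB : SatisfiesBianchi R := hBianchi
  intro X Y
  rw [← sum_smul_skewBasis X, ← sum_smul_skewBasis Y]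
  simp only [map_sum, LinearMap.sum_apply, map_smul, LinearMap.smul_apply, trace_sum, trace_smul,
    hB.trace_skewBasis hn hsymm, smul_zero, sum_const_zero]
end

section
/- Let n ≥ 3 and let V = {S ∈ Matₙ(ℂ) : Sᵀ = S} be the space of symmetric n×n complex matrices, with the representation ρ : Matₙ(ℂ) → End(V) given by ρ(A)S = AS + S·Aᵀ (the natural action of gl(n,ℂ) on ⊙²ℂⁿ). If R : V × V → Matₙ(ℂ) is a symmetric bilinear map such that ρ(R(X,Y))Z + ρ(R(Y,Z))X + ρ(R(Z,X))Y = 0 for all X, Y, Z ∈ V, then tr(R(X,Y)) = 0 for all X, Y ∈ V. (Equivalently, 𝓡̄(gl(n,ℂ) acting on ⊙²ℂⁿ) = 𝓡̄(sl(n,ℂ)).) -/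
open Matrix

/-- The space `⊙²ℂⁿ` of symmetric `n × n` complex matrices. -/
noncomputable def symMat (n : ℕ) : Submodule ℂ (Matrix (Fin n) (Fin n) ℂ) where
  carrier := {S | Sᵀ = S}
  add_mem' := by
    intro a b ha hb
    simp only [Set.mem_setOf_eq] at *
    rw [Matrix.transpose_add, ha, hb]
  zero_mem' := by
    simp only [Set.mem_setOf_eq, Matrix.transpose_zero]
  smul_mem' := by
    intro c a ha
    simp only [Set.mem_setOf_eq] at *
    rw [Matrix.transpose_smul, ha]

/-!
`symRep A S` is `ρ(A)S = AS + SAᵀ`. For symmetric `S, T` one has `tr(ρ(A)S · T) = 2 tr(AST)`,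
so pairing Bianchi identities involving the identity matrix `I` with symmetric matrices turns
them into linear relations between traces. With `K = R(I,I)`, `F_X = R(X,I)` and `A = R(X,Y)`:
the identity at `(I,I,I)` paired with `XY + YX` gives `tr(KXY) + tr(KYX) = 0`;
at `(X,I,I)` paired with `Y` it gives `2 tr(F_X Y) + tr(KXY) = 0`, and symmetrically for `Y`;
at `(X,Y,I)` paired with `I` it gives `tr A + tr(F_X Y) + tr(F_Y X) = 0`. Together `tr A = 0`.
-/

namespace Matrix

variable {ι 𝕜 : Type*} [Fintype ι]

def symRep [CommSemiring 𝕜] (A S : Matrix ι ι 𝕜) : Matrix ι ι 𝕜 := A * S + S * Aᵀ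

theorem trace_symRep_mul [CommSemiring 𝕜] (A : Matrix ι ι 𝕜) {S T : Matrix ι ι 𝕜}
    (hS : Sᵀ = S) (hT : Tᵀ = T) : trace (symRep A S * T) = 2 * trace (A * S * T) := by
  have hflip : trace (S * Aᵀ * T) = trace (A * S * T) := by
    calc trace (S * Aᵀ * T) = trace ((S * Aᵀ * T)ᵀ) := (trace_transpose _).symm
      _ = trace (T * A * S) := by simp only [transpose_mul, transpose_transpose, hS, hT,
          Matrix.mul_assoc]
      _ = trace (A * S * T) := by rw [Matrix.mul_assoc, trace_mul_comm, Matrix.mul_assoc]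
  rw [symRep, add_mul, trace_add, hflip, two_mul]

theorem trace_eq_zero_of_bianchi [Field 𝕜] [CharZero 𝕜] [DecidableEq ι]
    {V : Set (Matrix ι ι 𝕜)} (hV : ∀ S ∈ V, Sᵀ = S) (hone : (1 : Matrix ι ι 𝕜) ∈ V)
    (R : V → V → Matrix ι ι 𝕜) (hsymm : ∀ X Y, R X Y = R Y X)
    (hBianchi : ∀ X Y Z : V,
      symRep (R X Y) (Z : Matrix ι ι 𝕜) + symRep (R Y Z) X + symRep (R Z X) Y = 0)
    (X Y : V) : trace (R X Y) = 0 := by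
  let I : V := ⟨1, hone⟩
  have hX : X.1ᵀ = X.1 := hV _ X.2
  have hY : Y.1ᵀ = Y.1 := hV _ Y.2
  have hXY : (X.1 * Y.1 + Y.1 * X.1)ᵀ = X.1 * Y.1 + Y.1 * X.1 := by
    rw [transpose_add, transpose_mul, transpose_mul, hX, hY, add_comm]
  have bianchi_paired : ∀ (Z₁ Z₂ Z₃ : V) {T : Matrix ι ι 𝕜}, Tᵀ = T →
      2 * trace (R Z₁ Z₂ * Z₃.1 * T) + 2 * trace (R Z₂ Z₃ * Z₁.1 * T) +
        2 * trace (R Z₃ Z₁ * Z₂.1 * T) = 0 := fun Z₁ Z₂ Z₃ _ hT => by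
    rw [← trace_symRep_mul _ (hV _ Z₃.2) hT, ← trace_symRep_mul _ (hV _ Z₁.2) hT,
      ← trace_symRep_mul _ (hV _ Z₂.2) hT, ← trace_add, ← trace_add, ← add_mul, ← add_mul,
      hBianchi, zero_mul, trace_zero]
  have hIII := bianchi_paired I I I hXY
  have hXII := bianchi_paired X I I hY
  have hYII := bianchi_paired Y I I hX
  have hXYI := bianchi_paired X Y I transpose_one
  rw [hsymm I X] at hXII hXYI
  rw [hsymm I Y] at hYII
  simp only [I, mul_one, Matrix.mul_add, trace_add, Matrix.mul_assoc] at hIII hXII hYII hXYI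
  linear_combination hXYI / 2 - hXII / 4 - hYII / 4 + hIII / 12

end Matrix

theorem stmt8_general (n : ℕ)
    (R : symMat n →ₗ[ℂ] symMat n →ₗ[ℂ] Matrix (Fin n) (Fin n) ℂ)
    (hsymm : ∀ X Y : symMat n, R X Y = R Y X)
    (hBianchi : ∀ X Y Z : symMat n,
      (R X Y * (Z : Matrix (Fin n) (Fin n) ℂ) + (Z : Matrix (Fin n) (Fin n) ℂ) * (R X Y)ᵀ)
      + (R Y Z * (X : Matrix (Fin n) (Fin n) ℂ) + (X : Matrix (Fin n) (Fin n) ℂ) * (R Y Z)ᵀ)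
      + (R Z X * (Y : Matrix (Fin n) (Fin n) ℂ) + (Y : Matrix (Fin n) (Fin n) ℂ) * (R Z X)ᵀ)
      = 0) :
    ∀ X Y : symMat n, (R X Y).trace = 0 :=
  trace_eq_zero_of_bianchi (V := symMat n) (fun _ hS => hS) transpose_one (fun X Y => R X Y)
    hsymm hBianchi

/-- for `n ≥ 3`, any skew-curvature tensor for the natural action of
`gl(n,ℂ)` on `⊙²ℂⁿ` (symmetric matrices, `ρ(A)S = AS + SAᵀ`) is traceless,
i.e. `𝓡̄(gl(n,ℂ)) = 𝓡̄(sl(n,ℂ))` for this representation. -/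
theorem stmt8 (n : ℕ) (hn : 3 ≤ n)
    (R : symMat n →ₗ[ℂ] symMat n →ₗ[ℂ] Matrix (Fin n) (Fin n) ℂ)
    (hsymm : ∀ X Y : symMat n, R X Y = R Y X)
    (hBianchi : ∀ X Y Z : symMat n,
      (R X Y * (Z : Matrix (Fin n) (Fin n) ℂ) + (Z : Matrix (Fin n) (Fin n) ℂ) * (R X Y)ᵀ)
      + (R Y Z * (X : Matrix (Fin n) (Fin n) ℂ) + (X : Matrix (Fin n) (Fin n) ℂ) * (R Y Z)ᵀ)
      + (R Z X * (Y : Matrix (Fin n) (Fin n) ℂ) + (Y : Matrix (Fin n) (Fin n) ℂ) * (R Z X)ᵀ)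
      = 0) :
    ∀ X Y : symMat n, (R X Y).trace = 0 :=
  stmt8_general n R hsymm hBianchi
end

section
/- Let n ≥ 3, V = ℂⁿ ⊗ ℂⁿ, and 𝔤 = {A ⊗ id + id ⊗ B + λ·id_V : A, B ∈ End(ℂⁿ) with tr A = tr B = 0, λ ∈ ℂ} ⊆ End(V) (the image of sl(n,ℂ) ⊕ sl(n,ℂ) ⊕ ℂ acting on ℂⁿ ⊗ ℂⁿ). Then every skew-curvature tensor of type 𝔤 takes values in the subalgebra {A ⊗ id + id ⊗ B : tr A = tr B = 0}; equivalently, tr(R(x,y)) = 0 for every R ∈ 𝓡̄(𝔤) and all x, y ∈ V. In particular, 𝓡̄(sl(n,ℂ) ⊕ sl(n,ℂ) ⊕ ℂ) = 𝓡̄(sl(n,ℂ) ⊕ sl(n,ℂ)) and sl(n,ℂ) ⊕ sl(n,ℂ) ⊕ ℂ acting on ℂⁿ ⊗ ℂⁿ is not a skew-Berger algebra. -/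
open TensorProduct

/-! Write `T ∈ 𝔤` as `A ⊗ 1 + 1 ⊗ B + c`. In the basis `e_a ⊗ e_b` its matrix entry at
`(a, b), (c, d)` vanishes unless `a = c` or `b = d`, and its diagonal entries are
`A a a + B b b + c`, so `tr T = n² c = n (∑ₐ T_{am,am} + ∑_b T_{lb,lb} - n T_{lm,lm})`.
For `T = R(e_{pq}, e_{rs})` pick `l ∉ {p, r}` and `m ∉ {q, s}` (possible as `n ≥ 3`). The Bianchi
identity on `e_{lm}` read at `e_{lm}` kills `T_{lm,lm}`; summed along the row and the column
through `(l, m)` it expresses the two sums by four off-diagonal entries, which cancel in pairs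
by the Bianchi identity for `(e_{lq}, e_{rs}, e_{pm})`. So `tr R` vanishes; a traceless
element of `𝔤` has `c = 0`, while `1 ∈ 𝔤` has trace `n² ≠ 0`. -/

open Matrix Kronecker

namespace TensorSquare

variable (ι : Type*)

abbrev V := (ι → ℂ) ⊗[ℂ] (ι → ℂ)

def slSum : Submodule ℂ (Module.End ℂ (V ι)) :=
  Submodule.span ℂ {T | ∃ A B : Module.End ℂ (ι → ℂ),
    LinearMap.trace ℂ (ι → ℂ) A = 0 ∧ LinearMap.trace ℂ (ι → ℂ) B = 0 ∧
    T = TensorProduct.map A LinearMap.id + TensorProduct.map LinearMap.id B}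

def slSumScalar : Submodule ℂ (Module.End ℂ (V ι)) :=
  Submodule.span ℂ {T | ∃ A B : Module.End ℂ (ι → ℂ), ∃ c : ℂ,
    LinearMap.trace ℂ (ι → ℂ) A = 0 ∧ LinearMap.trace ℂ (ι → ℂ) B = 0 ∧
    T = TensorProduct.map A LinearMap.id + TensorProduct.map LinearMap.id B + c • 1}

variable {ι}

lemma one_mem_slSumScalar : (1 : Module.End ℂ (V ι)) ∈ slSumScalar ι :=
  Submodule.subset_span ⟨0, 0, 1, map_zero _, map_zero _, by simp [map_zero_left, map_zero_right]⟩

lemma exists_eq_of_mem_slSumScalar {T : Module.End ℂ (V ι)} (hT : T ∈ slSumScalar ι) :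
    ∃ A B : Module.End ℂ (ι → ℂ), ∃ c : ℂ,
      LinearMap.trace ℂ (ι → ℂ) A = 0 ∧ LinearMap.trace ℂ (ι → ℂ) B = 0 ∧
      T = TensorProduct.map A LinearMap.id + TensorProduct.map LinearMap.id B + c • 1 := by
  induction hT using Submodule.span_induction with
  | mem T hT => exact hT
  | zero => exact ⟨0, 0, 0, map_zero _, map_zero _, by simp [map_zero_left, map_zero_right]⟩
  | add T T' _ _ ih ih' =>
    obtain ⟨A, B, c, hA, hB, rfl⟩ := ih
    obtain ⟨A', B', c', hA', hB', rfl⟩ := ih'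
    refine ⟨A + A', B + B', c + c', by simp [hA, hA'], by simp [hB, hB'], ?_⟩
    rw [map_add_left, map_add_right, add_smul]
    abel
  | smul a T _ ih =>
    obtain ⟨A, B, c, hA, hB, rfl⟩ := ih
    refine ⟨a • A, a • B, a • c, by simp [hA], by simp [hB], ?_⟩
    rw [map_smul_left, map_smul_right, smul_assoc]
    simp only [smul_add]

variable [Fintype ι]

lemma mem_slSum_of_trace_eq_zero [Nonempty ι] {T : Module.End ℂ (V ι)}
    (hT : T ∈ slSumScalar ι) (htr : LinearMap.trace ℂ (V ι) T = 0) : T ∈ slSum ι := by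
  obtain ⟨A, B, c, hA, hB, rfl⟩ := exists_eq_of_mem_slSumScalar hT
  have hc : (Module.finrank ℂ (ι → ℂ) : ℂ) ^ 2 * c = 0 := by
    simpa [LinearMap.trace_tensorProduct', hA, hB, Module.finrank_tensorProduct, sq,
      mul_comm] using htr
  obtain rfl : c = 0 := by simpa using hc
  rw [zero_smul, add_zero]
  exact Submodule.subset_span ⟨A, B, hA, hB, rfl⟩

variable (ι) [DecidableEq ι]

noncomputable def basis : Module.Basis (ι × ι) ℂ (V ι) :=
  (Pi.basisFun ℂ ι).tensorProduct (Pi.basisFun ℂ ι)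

noncomputable abbrev mat (T : Module.End ℂ (V ι)) : Matrix (ι × ι) (ι × ι) ℂ :=
  LinearMap.toMatrix (basis ι) (basis ι) T

variable {ι}

lemma exists_mat_eq_of_mem_slSumScalar {T : Module.End ℂ (V ι)} (hT : T ∈ slSumScalar ι) :
    ∃ A B : Matrix ι ι ℂ, ∃ c : ℂ, A.trace = 0 ∧ B.trace = 0 ∧
      mat ι T = A ⊗ₖ 1 + 1 ⊗ₖ B + c • 1 := by
  obtain ⟨A, B, c, hA, hB, rfl⟩ := exists_eq_of_mem_slSumScalar hT
  refine ⟨LinearMap.toMatrix (Pi.basisFun ℂ ι) (Pi.basisFun ℂ ι) A,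
    LinearMap.toMatrix (Pi.basisFun ℂ ι) (Pi.basisFun ℂ ι) B, c, ?_, ?_, ?_⟩
  · rwa [← LinearMap.trace_eq_matrix_trace]
  · rwa [← LinearMap.trace_eq_matrix_trace]
  · simp only [mat, basis, map_add, map_smul, TensorProduct.toMatrix_map, LinearMap.toMatrix_id,
      LinearMap.toMatrix_one]

variable {T : Module.End ℂ (V ι)}

lemma mat_apply_eq_zero (hT : T ∈ slSumScalar ι) {a b c d : ι} (hac : a ≠ c) (hbd : b ≠ d) :
    mat ι T (a, b) (c, d) = 0 := by
  obtain ⟨A, B, c, -, -, hT⟩ := exists_mat_eq_of_mem_slSumScalar hT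
  simp [hT, one_apply, hac, hbd]

lemma mat_apply_left (hT : T ∈ slSumScalar ι) {a c : ι} (hac : a ≠ c) (b b' : ι) :
    mat ι T (a, b) (c, b) = mat ι T (a, b') (c, b') := by
  obtain ⟨A, B, c, -, -, hT⟩ := exists_mat_eq_of_mem_slSumScalar hT
  simp [hT, one_apply, hac]

lemma mat_apply_right (hT : T ∈ slSumScalar ι) {b d : ι} (hbd : b ≠ d) (a a' : ι) :
    mat ι T (a, b) (a, d) = mat ι T (a', b) (a', d) := by
  obtain ⟨A, B, c, -, -, hT⟩ := exists_mat_eq_of_mem_slSumScalar hT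
  simp [hT, one_apply, hbd]

lemma trace_eq_of_mem_slSumScalar (hT : T ∈ slSumScalar ι) (l m : ι) :
    LinearMap.trace ℂ (V ι) T = Fintype.card ι * (∑ a, mat ι T (a, m) (a, m) +
      ∑ b, mat ι T (l, b) (l, b) - Fintype.card ι * mat ι T (l, m) (l, m)) := by
  rw [LinearMap.trace_eq_matrix_trace ℂ (basis ι)]
  change (mat ι T).trace = _
  obtain ⟨A, B, c, hA, hB, hT⟩ := exists_mat_eq_of_mem_slSumScalar hT
  have hA' : ∑ a, A a a = 0 := hA
  have hB' : ∑ b, B b b = 0 := hB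
  rw [hT]
  simp only [Matrix.trace, diag, Matrix.add_apply, Matrix.smul_apply, kroneckerMap_apply,
    one_apply_eq, Fintype.sum_prod_type, Finset.sum_add_distrib, ← Finset.sum_mul,
    ← Finset.mul_sum, hA', hB', smul_eq_mul, Finset.sum_const, Finset.card_univ,
    nsmul_eq_mul, Fintype.card_prod]
  push_cast
  ring

lemma exists_ne_ne (hn : 3 ≤ Fintype.card ι) (p r : ι) : ∃ l, l ≠ p ∧ l ≠ r := by
  obtain ⟨l, -, hl⟩ := Finset.exists_mem_notMem_of_card_lt_card (s := {p, r})
    (t := Finset.univ) ((Finset.card_le_two).trans_lt (by simp only [Finset.card_univ]; omega))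
  exact ⟨l, by simpa using hl⟩

section SkewCurv

variable {R : V ι →ₗ[ℂ] V ι →ₗ[ℂ] Module.End ℂ (V ι)} (hR : IsSkewCurv (slSumScalar ι) R)
include hR

local notation "e" => basis ι

lemma mat_bianchi (i j k l : ι × ι) :
    mat ι (R (e j) (e k)) i l + mat ι (R (e k) (e l)) i j + mat ι (R (e l) (e j)) i k = 0 := by
  simp only [mat, LinearMap.toMatrix_apply, ← Finsupp.add_apply, ← map_add, hR.2.2,
    map_zero, Finsupp.zero_apply]

lemma mat_diag_eq_zero {p q r s l m : ι} (hlp : l ≠ p) (hlr : l ≠ r) (hmq : m ≠ q)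
    (hms : m ≠ s) : mat ι (R (e (p, q)) (e (r, s))) (l, m) (l, m) = 0 := by
  have h := mat_bianchi hR (l, m) (p, q) (r, s) (l, m)
  rwa [mat_apply_eq_zero (hR.2.1 _ _) hlp hmq, mat_apply_eq_zero (hR.2.1 _ _) hlr hms,
    add_zero, add_zero] at h

lemma mat_left_add_mat_right_eq_zero {p q r s l m : ι} (hlp : l ≠ p) (hlr : l ≠ r)
    (hmq : m ≠ q) (hms : m ≠ s) :
    mat ι (R (e (r, s)) (e (l, q))) (l, q) (p, q) +
      mat ι (R (e (r, s)) (e (p, m))) (p, m) (p, q) = 0 := by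
  have h := mat_bianchi hR (l, m) (l, q) (r, s) (p, m)
  rwa [mat_apply_eq_zero (hR.2.1 _ _) hlr hms, add_zero,
    mat_apply_left (hR.2.1 _ _) hlp m q, mat_apply_right (hR.2.1 _ _) hmq l p, hR.1] at h

lemma sum_mat_diag_col {p q r s m : ι} (hmq : m ≠ q) (hms : m ≠ s) :
    ∑ a, mat ι (R (e (p, q)) (e (r, s))) (a, m) (a, m) =
      -(mat ι (R (e (r, s)) (e (p, m))) (p, m) (p, q) +
        mat ι (R (e (p, q)) (e (r, m))) (r, m) (r, s)) := by
  have h : ∑ a, (mat ι (R (e (p, q)) (e (r, s))) (a, m) (a, m) +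
      mat ι (R (e (r, s)) (e (a, m))) (a, m) (p, q) +
      mat ι (R (e (a, m)) (e (p, q))) (a, m) (r, s)) = 0 :=
    Finset.sum_eq_zero fun a _ => mat_bianchi hR (a, m) (p, q) (r, s) (a, m)
  rw [Finset.sum_add_distrib, Finset.sum_add_distrib,
    Finset.sum_eq_single p (fun a _ hap => mat_apply_eq_zero (hR.2.1 _ _) hap hmq) (by simp),
    Finset.sum_eq_single r (fun a _ har => mat_apply_eq_zero (hR.2.1 _ _) har hms) (by simp),
    hR.1 (e (r, m))] at h
  linear_combination h

lemma sum_mat_diag_row {p q r s l : ι} (hlp : l ≠ p) (hlr : l ≠ r) :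
    ∑ b, mat ι (R (e (p, q)) (e (r, s))) (l, b) (l, b) =
      -(mat ι (R (e (r, s)) (e (l, q))) (l, q) (p, q) +
        mat ι (R (e (p, q)) (e (l, s))) (l, s) (r, s)) := by
  have h : ∑ b, (mat ι (R (e (p, q)) (e (r, s))) (l, b) (l, b) +
      mat ι (R (e (r, s)) (e (l, b))) (l, b) (p, q) +
      mat ι (R (e (l, b)) (e (p, q))) (l, b) (r, s)) = 0 :=
    Finset.sum_eq_zero fun b _ => mat_bianchi hR (l, b) (p, q) (r, s) (l, b)
  rw [Finset.sum_add_distrib, Finset.sum_add_distrib,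
    Finset.sum_eq_single q (fun b _ hbq => mat_apply_eq_zero (hR.2.1 _ _) hlp hbq) (by simp),
    Finset.sum_eq_single s (fun b _ hbs => mat_apply_eq_zero (hR.2.1 _ _) hlr hbs) (by simp),
    hR.1 (e (l, s))] at h
  linear_combination h

lemma trace_apply_basis_eq_zero (hn : 3 ≤ Fintype.card ι) (p q r s : ι) :
    LinearMap.trace ℂ (V ι) (R (e (p, q)) (e (r, s))) = 0 := by
  obtain ⟨l, hlp, hlr⟩ := exists_ne_ne hn p r
  obtain ⟨m, hmq, hms⟩ := exists_ne_ne hn q s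
  have hsum : ∑ a, mat ι (R (e (p, q)) (e (r, s))) (a, m) (a, m) +
      ∑ b, mat ι (R (e (p, q)) (e (r, s))) (l, b) (l, b) = 0 := by
    rw [sum_mat_diag_col hR hmq hms, sum_mat_diag_row hR hlp hlr]
    linear_combination -mat_left_add_mat_right_eq_zero hR hlp hlr hmq hms -
      mat_left_add_mat_right_eq_zero hR hlr hlp hms hmq
  rw [trace_eq_of_mem_slSumScalar (hR.2.1 _ _) l m, hsum,
    mat_diag_eq_zero hR hlp hlr hmq hms]
  ring

lemma trace_apply_eq_zero (hn : 3 ≤ Fintype.card ι) (x y : V ι) :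
    LinearMap.trace ℂ (V ι) (R x y) = 0 := by
  have h : R.compr₂ (LinearMap.trace ℂ (V ι)) = 0 :=
    LinearMap.ext_basis e e fun j k => trace_apply_basis_eq_zero hR hn j.1 j.2 k.1 k.2
  exact LinearMap.congr_fun₂ h x y

end SkewCurv

end TensorSquare

open TensorSquare in
/-- for `n ≥ 3` and `V = ℂⁿ ⊗ ℂⁿ`, every skew-curvature tensor of type
`sl(n,ℂ) ⊕ sl(n,ℂ) ⊕ ℂ` takes values in `sl(n,ℂ) ⊕ sl(n,ℂ)` (equivalently, is
traceless); in particular `sl(n,ℂ) ⊕ sl(n,ℂ) ⊕ ℂ` on `ℂⁿ ⊗ ℂⁿ` is not a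
skew-Berger algebra. -/
theorem stmt9 (n : ℕ) (hn : 3 ≤ n)
    (h₀ h : Submodule ℂ (Module.End ℂ ((Fin n → ℂ) ⊗[ℂ] (Fin n → ℂ))))
    (hh₀ : h₀ = Submodule.span ℂ
      {T : Module.End ℂ ((Fin n → ℂ) ⊗[ℂ] (Fin n → ℂ)) |
        ∃ A B : Module.End ℂ (Fin n → ℂ),
          LinearMap.trace ℂ (Fin n → ℂ) A = 0 ∧ LinearMap.trace ℂ (Fin n → ℂ) B = 0 ∧
          T = TensorProduct.map A LinearMap.id + TensorProduct.map LinearMap.id B})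
    (hh : h = Submodule.span ℂ
      {T : Module.End ℂ ((Fin n → ℂ) ⊗[ℂ] (Fin n → ℂ)) |
        ∃ A B : Module.End ℂ (Fin n → ℂ), ∃ c : ℂ,
          LinearMap.trace ℂ (Fin n → ℂ) A = 0 ∧ LinearMap.trace ℂ (Fin n → ℂ) B = 0 ∧
          T = TensorProduct.map A LinearMap.id + TensorProduct.map LinearMap.id B + c • 1}) :
    (∀ R, IsSkewCurv h R → ∀ x y,
      R x y ∈ h₀ ∧ LinearMap.trace ℂ ((Fin n → ℂ) ⊗[ℂ] (Fin n → ℂ)) (R x y) = 0) ∧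
    ¬ IsSkewBerger h := by
  change h₀ = slSum (Fin n) at hh₀
  change h = slSumScalar (Fin n) at hh
  subst hh₀ hh
  have : Nonempty (Fin n) := ⟨⟨0, by omega⟩⟩
  have hcard : 3 ≤ Fintype.card (Fin n) := by simpa using hn
  have htrace := fun R (hR : IsSkewCurv (slSumScalar (Fin n)) R) => trace_apply_eq_zero hR hcard
  refine ⟨fun R hR x y => ⟨mem_slSum_of_trace_eq_zero (hR.2.1 x y) (htrace R hR x y),
    htrace R hR x y⟩, fun hB => ?_⟩
  have hle : slSumScalar (Fin n) ≤ LinearMap.ker (LinearMap.trace ℂ _) := by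
    rw [hB, Submodule.span_le]
    rintro _ ⟨R, hR, x, y, rfl⟩
    exact htrace R hR x y
  have h1 := hle one_mem_slSumScalar
  rw [LinearMap.mem_ker, LinearMap.trace_one, Module.finrank_tensorProduct,
    Module.finrank_fintype_fun_eq_card, Fintype.card_fin] at h1
  have : n * n = 0 := by exact_mod_cast h1
  simp only [mul_self_eq_zero] at this
  omega
end

section
/- Let n ≥ 3 and let V = {S ∈ Matₙ(ℂ) : Sᵀ = S} be the symmetric n×n complex matrices, on which the orthogonal Lie algebra so(n,ℂ) = {A ∈ Matₙ(ℂ) : Aᵀ = −A} acts by S ↦ AS + SAᵀ = [A, S]. Then every skew-curvature tensor of this representation vanishes: if R : V × V → so(n,ℂ) is a symmetric bilinear map satisfying [R(X,Y), Z] + [R(Y,Z), X] + [R(Z,X), Y] = 0 for all X, Y, Z ∈ V, then R = 0. (That is, 𝓡̄(so(n,ℂ) acting on ⊙²ℂⁿ) = 0.) -/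
open Matrix

/-!
Bracketing with a diagonal matrix `diag d` multiplies the `(p, q)` entry by `d q - d p`. So for
`p ≠ q`, the `(p, q)` entry of the Bianchi identity with diagonal arguments is a scalar identity
`a(x, y) c(z) + a(y, z) c(x) + a(z, x) c(y) = 0` with `c ≠ 0`, which forces `a = 0`. This kills
`R(D, D')` off the diagonal; then the Bianchi identity at `(X, D, D')` kills `R(X, D)`, and at
`(X, Y, D)` it kills `R(X, Y)`. Diagonal entries vanish by skew-symmetry throughout.
-/

theorem Matrix.lie_diagonal_apply {ι K : Type*} [Fintype ι] [DecidableEq ι] [CommRing K]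
    (A : Matrix ι ι K) (d : ι → K) (p q : ι) :
    ⁅A, diagonal d⁆ p q = A p q * (d q - d p) := by
  simp only [Ring.lie_def, sub_apply, mul_diagonal, diagonal_mul]
  ring

/-- Needed because `zero_lie` does not fire on matrices: the `0` of `Matrix` is not reducibly the
`0` of its `LieRing` structure. -/
@[simp]
theorem Matrix.zero_lie {ι K : Type*} [Fintype ι] [CommRing K] (A : Matrix ι ι K) :
    ⁅(0 : Matrix ι ι K), A⁆ = 0 := by
  simp [Ring.lie_def]

theorem Matrix.eq_zero_of_transpose_eq_neg {ι K : Type*} [Field K] [CharZero K]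
    {A : Matrix ι ι K} (hA : Aᵀ = -A) (hoff : ∀ p q, p ≠ q → A p q = 0) : A = 0 := by
  ext p q
  by_cases hpq : p = q
  · subst hpq
    have h := congrFun (congrFun hA p) p
    simp only [transpose_apply, neg_apply] at h
    rw [zero_apply]
    linear_combination h / 2
  · exact hoff p q hpq

theorem exists_apply_sub_apply_ne_zero {ι K : Type*} [DecidableEq ι] [Ring K] [Nontrivial K]
    {p q : ι} (hpq : p ≠ q) : ∃ z : ι → K, z q - z p ≠ 0 :=
  ⟨Pi.single q 1, by simp [hpq]⟩

section ScalarIdentities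

variable {V K : Type*} [Field K] [CharZero K] {c : V → K} {z : V}

theorem eq_zero_of_mul_add_mul_eq_zero {b : V → K} (hz : c z ≠ 0)
    (h : ∀ x y, b x * c y + b y * c x = 0) (x : V) : b x = 0 := by
  have hbz : b z = 0 := by
    have h2 : 2 * (b z * c z) = 0 := by linear_combination h z z
    simpa [hz] using h2
  simpa [hbz, hz] using h x z

theorem eq_zero_of_cyclic_mul_eq_zero {a : V → V → K} (hz : c z ≠ 0)
    (hsymm : ∀ x y, a x y = a y x)
    (h : ∀ x y w, a x y * c w + a y w * c x + a w x * c y = 0) (x y : V) : a x y = 0 := by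
  have hzz : a z z = 0 := by
    have h3 : 3 * (a z z * c z) = 0 := by linear_combination h z z z
    simpa [hz] using h3
  have hxz : ∀ x, a x z = 0 := fun x => by
    have h2 : 2 * (a x z * c z) = 0 := by
      linear_combination h x z z - c z * hsymm z x - c x * hzz
    simpa [hz] using h2
  simpa [hxz, hsymm z x, hz] using h x y z

end ScalarIdentities

noncomputable def diagSym {n : ℕ} (d : Fin n → ℂ) : symMat n :=
  ⟨diagonal d, diagonal_transpose d⟩

@[simp]
theorem coe_diagSym {n : ℕ} (d : Fin n → ℂ) :
    (diagSym d : Matrix (Fin n) (Fin n) ℂ) = diagonal d :=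
  rfl

structure IsSkewCurvatureTensor {n : ℕ}
    (R : symMat n →ₗ[ℂ] symMat n →ₗ[ℂ] Matrix (Fin n) (Fin n) ℂ) : Prop where
  transpose_eq_neg : ∀ X Y, (R X Y)ᵀ = -(R X Y)
  symm : ∀ X Y, R X Y = R Y X
  bianchi : ∀ X Y Z : symMat n,
    ⁅R X Y, (Z : Matrix (Fin n) (Fin n) ℂ)⁆ + ⁅R Y Z, (X : Matrix (Fin n) (Fin n) ℂ)⁆
      + ⁅R Z X, (Y : Matrix (Fin n) (Fin n) ℂ)⁆ = 0

namespace IsSkewCurvatureTensor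

variable {n : ℕ} {R : symMat n →ₗ[ℂ] symMat n →ₗ[ℂ] Matrix (Fin n) (Fin n) ℂ}

theorem apply_diagSym_diagSym (hR : IsSkewCurvatureTensor R) (d e : Fin n → ℂ) :
    R (diagSym d) (diagSym e) = 0 := by
  refine eq_zero_of_transpose_eq_neg (hR.transpose_eq_neg _ _) fun p q hpq => ?_
  obtain ⟨z, hz⟩ := exists_apply_sub_apply_ne_zero (K := ℂ) hpq
  refine eq_zero_of_cyclic_mul_eq_zero (a := fun d e => R (diagSym d) (diagSym e) p q)
    (c := fun d => d q - d p) hz (fun d e => by rw [hR.symm]) (fun d e f => ?_) d e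
  have h := congrFun (congrFun (hR.bianchi (diagSym d) (diagSym e) (diagSym f)) p) q
  simpa [lie_diagonal_apply] using h

theorem apply_diagSym (hR : IsSkewCurvatureTensor R) (X : symMat n) (d : Fin n → ℂ) :
    R X (diagSym d) = 0 := by
  refine eq_zero_of_transpose_eq_neg (hR.transpose_eq_neg _ _) fun p q hpq => ?_
  obtain ⟨z, hz⟩ := exists_apply_sub_apply_ne_zero (K := ℂ) hpq
  refine eq_zero_of_mul_add_mul_eq_zero (b := fun d => R X (diagSym d) p q)
    (c := fun d => d q - d p) hz (fun d e => ?_) d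
  have h := congrFun (congrFun (hR.bianchi X (diagSym d) (diagSym e)) p) q
  rw [hR.apply_diagSym_diagSym, hR.symm (diagSym e)] at h
  simpa [lie_diagonal_apply] using h

theorem eq_zero (hR : IsSkewCurvatureTensor R) : R = 0 := by
  ext X Y : 2
  refine eq_zero_of_transpose_eq_neg (hR.transpose_eq_neg _ _) fun p q hpq => ?_
  obtain ⟨z, hz⟩ := exists_apply_sub_apply_ne_zero (K := ℂ) hpq
  have h := congrFun (congrFun (hR.bianchi X Y (diagSym z)) p) q
  rw [hR.apply_diagSym, hR.symm (diagSym z), hR.apply_diagSym] at h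
  simpa [lie_diagonal_apply, hz] using h

end IsSkewCurvatureTensor

theorem stmt10_general (n : ℕ)
    (R : symMat n →ₗ[ℂ] symMat n →ₗ[ℂ] Matrix (Fin n) (Fin n) ℂ)
    (hso : ∀ X Y : symMat n, (R X Y)ᵀ = -(R X Y))
    (hsymm : ∀ X Y : symMat n, R X Y = R Y X)
    (hBianchi : ∀ X Y Z : symMat n,
      ⁅R X Y, (Z : Matrix (Fin n) (Fin n) ℂ)⁆
      + ⁅R Y Z, (X : Matrix (Fin n) (Fin n) ℂ)⁆
      + ⁅R Z X, (Y : Matrix (Fin n) (Fin n) ℂ)⁆ = 0) :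
    R = 0 :=
  IsSkewCurvatureTensor.eq_zero ⟨hso, hsymm, hBianchi⟩

/-- for `n ≥ 3`, every skew-curvature tensor of the representation of
`so(n,ℂ)` on the symmetric matrices `⊙²ℂⁿ` (acting by `S ↦ [A,S]`) vanishes:
`𝓡̄(so(n,ℂ) acting on ⊙²ℂⁿ) = 0`. -/
theorem stmt10 (n : ℕ) (hn : 3 ≤ n)
    (R : symMat n →ₗ[ℂ] symMat n →ₗ[ℂ] Matrix (Fin n) (Fin n) ℂ)
    (hso : ∀ X Y : symMat n, (R X Y)ᵀ = -(R X Y))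
    (hsymm : ∀ X Y : symMat n, R X Y = R Y X)
    (hBianchi : ∀ X Y Z : symMat n,
      ⁅R X Y, (Z : Matrix (Fin n) (Fin n) ℂ)⁆
      + ⁅R Y Z, (X : Matrix (Fin n) (Fin n) ℂ)⁆
      + ⁅R Z X, (Y : Matrix (Fin n) (Fin n) ℂ)⁆ = 0) :
    R = 0 :=
  stmt10_general n R hso hsymm hBianchi
end

section
/- Let 𝔤 be a finite-dimensional complex simple Lie algebra. Then the first skew-prolongation of its adjoint representation, namely {φ ∈ Hom(𝔤, ad(𝔤)) : φ(x)y = −φ(y)x for all x, y ∈ 𝔤}, is one-dimensional and is spanned by the map x ↦ ad(x). -/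
attribute [local instance 100] LieRing.ofAssociativeRing

/-!
Since `ad` is injective, an element of the skew-prolongation is `φ = ad ∘ ψ` for a linear `ψ`, and
skew-symmetry of `φ` says exactly that `⁅ψ x, y⁆ = ⁅x, ψ y⁆`. Such a `ψ` is self-adjoint for the
Killing form `κ`: `κ (ψ x) y - κ x (ψ y) = tr (ad (ψ ⁅y, x⁆))`, and every `ad z` is traceless
because `𝔤 = ⁅𝔤, 𝔤⁆`. Invariance and non-degeneracy of `κ` then upgrade the defining identity to
`ψ ⁅x, y⁆ = ⁅x, ψ y⁆`, so `ψ` is an endomorphism of the irreducible `𝔤`-module `𝔤`, hence a scalar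
by Schur's lemma.
-/

open LinearMap (trace)

lemma LinearMap.exists_comp_eq_of_injective {R M N P : Type*} [Semiring R] [AddCommMonoid M]
    [Module R M] [AddCommMonoid N] [Module R N] [AddCommMonoid P] [Module R P] {f : M →ₗ[R] N}
    (hf : Function.Injective f) (g : P →ₗ[R] N) (hg : ∀ p, g p ∈ LinearMap.range f) :
    ∃ k : P →ₗ[R] M, f ∘ₗ k = g :=
  ⟨(LinearEquiv.ofInjective f hf).symm ∘ₗ g.codRestrict _ hg, LinearMap.ext fun _ ↦ by simp⟩

lemma LieModule.exists_eq_smul_one_of_isIrreducible {K L M : Type*} [Field K] [IsAlgClosed K]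
    [LieRing L] [LieAlgebra K L] [AddCommGroup M] [Module K M] [LieRingModule L M]
    [LieModule K L M] [FiniteDimensional K M] [IsIrreducible K L M] (f : Module.End K M)
    (hf : ∀ (x : L) (m : M), f ⁅x, m⁆ = ⁅x, f m⁆) : ∃ c : K, f = c • 1 := by
  have := nontrivial_of_isIrreducible K L M
  obtain ⟨c, hc⟩ := Module.End.exists_eigenvalue f
  let E : LieSubmodule K L M :=
    { f.eigenspace c with
      lie_mem := by
        intro x m hm
        simp_all }
  have hE : E = ⊤ := by
    obtain ⟨m, hm⟩ := hc.exists_hasEigenvector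
    refine (IsSimpleOrder.eq_bot_or_eq_top E).resolve_left fun hbot ↦ hm.2 ?_
    exact (LieSubmodule.eq_bot_iff E).mp hbot m hm.1
  refine ⟨c, LinearMap.ext fun m ↦ ?_⟩
  have hm : m ∈ E := hE ▸ LieSubmodule.mem_top m
  simpa using Module.End.mem_eigenspace_iff.mp hm

namespace LieAlgebra

lemma IsSimple.lie_top_eq_top {R L : Type*} [CommRing R] [LieRing L] [LieAlgebra R L]
    [IsSimple R L] : ⁅(⊤ : LieIdeal R L), (⊤ : LieIdeal R L)⁆ = ⊤ := by
  refine lie_eq_self_of_isAtom_of_nonabelian _ (IsSimple.isAtom_top R L) ?_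
  rw [lie_abelian_iff_equiv_lie_abelian LieIdeal.topEquiv]
  exact IsSimple.non_abelian R

section QuasiCentroid

variable {R L : Type*} [CommRing R] [LieRing L] [LieAlgebra R L]

/-- Membership in the quasi-centroid of Leger and Luks. -/
def IsQuasiCentroidal (ψ : Module.End R L) : Prop :=
  ∀ x y : L, ⁅ψ x, y⁆ = ⁅x, ψ y⁆

namespace IsQuasiCentroidal

variable {ψ : Module.End R L} (hψ : IsQuasiCentroidal ψ)
include hψ

lemma ad_apply_eq_mul (x : L) : ad R L (ψ x) = ad R L x * ψ :=
  LinearMap.ext (hψ x)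

lemma isAdjointPair_killingForm (hL : ⁅(⊤ : LieIdeal R L), (⊤ : LieIdeal R L)⁆ = ⊤) :
    (killingForm R L).IsAdjointPair (killingForm R L) ψ ψ := by
  intro x y
  have htr : trace R L (ad R L ⁅y, x⁆ * ψ) = 0 := by
    rw [← hψ.ad_apply_eq_mul]
    refine LieModule.trace_toEnd_eq_zero_of_mem_lcs R L L le_rfl ?_
    simp [LieModule.lowerCentralSeries_succ, hL]
  calc killingForm R L (ψ x) y = trace R L (ad R L y * ad R L x * ψ) := by
        rw [killingForm_apply_apply, hψ.ad_apply_eq_mul, ← LinearMap.trace_mul_cycle]; rfl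
    _ = trace R L (ad R L ⁅y, x⁆ * ψ) + trace R L (ad R L x * (ad R L y * ψ)) := by
        rw [← map_add, LieHom.map_lie, Ring.lie_def, sub_mul, mul_assoc, mul_assoc, sub_add_cancel]
    _ = killingForm R L x (ψ y) := by
        rw [htr, zero_add, ← hψ.ad_apply_eq_mul, killingForm_apply_apply]; rfl

lemma map_lie [IsKilling R L] (hL : ⁅(⊤ : LieIdeal R L), (⊤ : LieIdeal R L)⁆ = ⊤) (x y : L) :
    ψ ⁅x, y⁆ = ⁅x, ψ y⁆ := by
  have h : ψ ⁅x, y⁆ - ⁅x, ψ y⁆ ∈ LinearMap.ker (killingForm R L) := by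
    refine LinearMap.mem_ker.mpr (LinearMap.ext fun w ↦ ?_)
    rw [map_sub, LinearMap.sub_apply, LinearMap.zero_apply, sub_eq_zero,
      hψ.isAdjointPair_killingForm hL, LieModule.traceForm_apply_lie_apply,
      LieModule.traceForm_apply_lie_apply, hψ y w]
  rwa [IsKilling.ker_killingForm_eq_bot, Submodule.mem_bot, sub_eq_zero] at h

end IsQuasiCentroidal

end QuasiCentroid

theorem IsQuasiCentroidal.exists_eq_smul_one {K L : Type*} [Field K] [CharZero K] [IsAlgClosed K]
    [LieRing L] [LieAlgebra K L] [FiniteDimensional K L] [IsSimple K L] {ψ : Module.End K L}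
    (hψ : IsQuasiCentroidal ψ) : ∃ c : K, ψ = c • 1 :=
  LieModule.exists_eq_smul_one_of_isIrreducible ψ (hψ.map_lie IsSimple.lie_top_eq_top)

end LieAlgebra

open LieAlgebra in
/-- for a finite-dimensional complex simple Lie algebra `𝔤`, the first
skew-prolongation `{φ ∈ Hom(𝔤, ad(𝔤)) : φ(x)y = −φ(y)x}` of the adjoint
representation is one-dimensional, spanned by `x ↦ ad(x)`. -/
theorem stmt16 {L : Type*} [LieRing L] [LieAlgebra ℂ L] [Module.Finite ℂ L]
    [LieAlgebra.IsSimple ℂ L] :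
    -- `ad` itself lies in the first skew-prolongation of `ad(𝔤)`
    ((∀ x y : L, LieAlgebra.ad ℂ L x y = -(LieAlgebra.ad ℂ L y x)) ∧
      (LieAlgebra.ad ℂ L).toLinearMap ≠ 0) ∧
    -- and every element of the first skew-prolongation is a multiple of `ad`
    (∀ φ : L →ₗ[ℂ] Module.End ℂ L,
      (∀ x : L, φ x ∈ LinearMap.range (LieAlgebra.ad ℂ L).toLinearMap) →
      (∀ x y : L, φ x y = -(φ y x)) →
      ∃ c : ℂ, φ = c • (LieAlgebra.ad ℂ L).toLinearMap) := by
  refine ⟨⟨fun x y ↦ (lie_skew x y).symm, fun h ↦ IsSimple.non_abelian ℂ (L := L) ⟨fun x y ↦ ?_⟩⟩,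
    fun φ hrange hskew ↦ ?_⟩
  · simpa using LinearMap.congr_fun (LinearMap.congr_fun h x) y
  obtain ⟨ψ, hψ⟩ := LinearMap.exists_comp_eq_of_injective
    (LieModule.IsFaithful.injective_toEnd (R := ℂ) (L := L) (M := L)) φ hrange
  have hφ (x y : L) : φ x y = ⁅ψ x, y⁆ := by rw [← hψ]; rfl
  have hqc : IsQuasiCentroidal ψ := fun x y ↦ by
    rw [← hφ, hskew, hφ, lie_skew]
  obtain ⟨c, rfl⟩ := hqc.exists_eq_smul_one
  exact ⟨c, LinearMap.ext fun x ↦ LinearMap.ext fun y ↦ by simp [hφ]⟩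
end

section
/- Let V be a finite-dimensional complex vector space and 𝔤 ⊆ End(V) a Lie subalgebra acting irreducibly on V which is a skew-Berger algebra. Suppose 𝔤 annihilates 𝓡̄(𝔤), i.e. for every A ∈ 𝔤, every R ∈ 𝓡̄(𝔤) and all x, y ∈ V one has [A, R(x,y)] = R(Ax, y) + R(x, Ay). Then 𝓡̄^∇(𝔤) = 0, where 𝓡̄^∇(𝔤) is the space of trilinear maps S : V × V × V → End(V), written (x, y, z) ↦ S_x(y,z), such that for each fixed x the map S_x is a skew-curvature tensor of type 𝔤 and S_x(y,z) + S_y(z,x) + S_z(x,y) = 0 for all x, y, z ∈ V. (That is, 𝔤 is a symmetric skew-Berger algebra.) -/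
attribute [local instance 100] LieRing.ofAssociativeRing

section Cyclic

variable {R V : Type*} [CommRing R] [AddCommGroup V] [Module R V]

def IsCyclicFor (S : V →ₗ[R] V →ₗ[R] V →ₗ[R] Module.End R V) (P : Module.End R V) : Prop :=
  ∀ x y z, S (P x) y z + S (P y) z x + S (P z) x y = 0

def cyclicSubmodule (S : V →ₗ[R] V →ₗ[R] V →ₗ[R] Module.End R V) :
    Submodule R (Module.End R V) where
  carrier := {P | IsCyclicFor S P}
  zero_mem' x y z := by simp
  add_mem' {P Q} hP hQ x y z := by
    simp only [LinearMap.add_apply, map_add]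
    linear_combination (norm := abel) hP x y z + hQ x y z
  smul_mem' c P hP x y z := by
    simp only [LinearMap.smul_apply, map_smul, ← smul_add, hP x y z, smul_zero]

theorem IsCyclicFor.mul_of_derivation {S : V →ₗ[R] V →ₗ[R] V →ₗ[R] Module.End R V}
    {P B : Module.End R V} (hP : IsCyclicFor S P)
    (hB : ∀ u y z, ⁅B, S u y z⁆ = S u (B y) z + S u y (B z)) : IsCyclicFor S (P * B) := by
  intro x y z
  have hbracket : ⁅B, S (P x) y z + S (P y) z x + S (P z) x y⁆ = 0 := by
    rw [hP x y z, lie_zero]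
  rw [lie_add, lie_add, hB, hB, hB] at hbracket
  simp only [Module.End.mul_apply]
  linear_combination (norm := abel) hP (B x) y z + hP (B y) z x + hP (B z) x y - hbracket

end Cyclic

theorem Algebra.toSubmodule_adjoin_le_of_mul_mem {R A : Type*} [CommSemiring R] [Semiring A]
    [Algebra R A] {s : Set A} {M : Submodule R A} (hone : 1 ∈ M)
    (hmul : ∀ P ∈ M, ∀ B ∈ s, P * B ∈ M) : Subalgebra.toSubmodule (Algebra.adjoin R s) ≤ M := by
  rw [Algebra.adjoin_eq_span, Submodule.span_le]
  intro P hP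
  induction hP using Submonoid.closure_induction_right with
  | one => exact hone
  | mul_right P _ B hB ih => exact hmul P ih B hB

theorem exists_mem_adjoin_apply_eq {R V : Type*} [CommRing R] [AddCommGroup V] [Module R V]
    {s : Set (Module.End R V)}
    (hirr : ∀ W : Submodule R V, (∀ A ∈ s, ∀ w ∈ W, A w ∈ W) → W = ⊥ ∨ W = ⊤)
    {w : V} (hw : w ≠ 0) (u : V) : ∃ P ∈ Algebra.adjoin R s, P w = u := by
  set W := (Subalgebra.toSubmodule (Algebra.adjoin R s)).map (LinearMap.applyₗ w)
  have hwW : w ∈ W := ⟨1, Subalgebra.one_mem _, rfl⟩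
  have hWinv : ∀ A ∈ s, ∀ v ∈ W, A v ∈ W := by
    rintro A hA _ ⟨P, hP, rfl⟩
    exact ⟨A * P, Subalgebra.mul_mem _ (Algebra.subset_adjoin hA) hP, rfl⟩
  obtain hbot | htop := hirr W hWinv
  · exact absurd (hbot ▸ hwW) (by simpa using hw)
  · obtain ⟨P, hP, hPw⟩ := htop ▸ Submodule.mem_top (x := u)
    exact ⟨P, hP, hPw⟩

theorem LinearMap.eq_zero_of_symm_of_apply_self_eq_zero {K V M : Type*} [Field K] [CharZero K]
    [AddCommGroup V] [Module K V] [AddCommGroup M] [Module K M] {B : V →ₗ[K] V →ₗ[K] M}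
    (hsymm : ∀ x y, B x y = B y x) (hdiag : ∀ x, B x x = 0) : B = 0 := by
  ext x y
  have h := hdiag (x + y)
  simp only [map_add, LinearMap.add_apply, hdiag, zero_add, add_zero, hsymm y x] at h
  have h2 : (2 : K) • B x y = 0 := by rw [two_smul]; exact h
  simpa using h2

theorem stmt17_general {V : Type*} [AddCommGroup V] [Module ℂ V]
    (g : LieSubalgebra ℂ (Module.End ℂ V))
    (hirr : ∀ W : Submodule ℂ V, (∀ A ∈ g, ∀ w ∈ W, A w ∈ W) → W = ⊥ ∨ W = ⊤)
    (hann : ∀ A ∈ g, ∀ R : V →ₗ[ℂ] V →ₗ[ℂ] Module.End ℂ V,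
      IsSkewCurv g.toSubmodule R →
      ∀ x y : V, ⁅A, R x y⁆ = R (A x) y + R x (A y)) :
    ∀ S : V →ₗ[ℂ] V →ₗ[ℂ] V →ₗ[ℂ] Module.End ℂ V,
      (∀ x : V, IsSkewCurv g.toSubmodule (S x)) →
      (∀ x y z : V, S x y z + S y z x + S z x y = 0) →
      S = 0 := by
  intro S hS hcyc
  have hadjoin : ∀ P ∈ Algebra.adjoin ℂ (g : Set (Module.End ℂ V)), IsCyclicFor S P :=
    fun P hP => Algebra.toSubmodule_adjoin_le_of_mul_mem (M := cyclicSubmodule S)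
      (fun x y z => by simpa using hcyc x y z)
      (fun Q hQ B hB => IsCyclicFor.mul_of_derivation hQ fun u => hann B hB (S u) (hS u)) hP
  have hdiag : ∀ u w, S u w w = 0 := by
    intro u w
    obtain rfl | hw := eq_or_ne w 0
    · simp
    obtain ⟨P, hP, rfl⟩ := exists_mem_adjoin_apply_eq hirr hw u
    have h3 : (3 : ℂ) • S (P w) w w = 0 := by
      rw [← hadjoin P hP w w w]
      module
    simpa using h3
  exact LinearMap.ext fun u =>
    LinearMap.eq_zero_of_symm_of_apply_self_eq_zero (hS u).1 (hdiag u)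

/-- an irreducible skew-Berger algebra `𝔤 ⊆ End(V)` annihilating
`𝓡̄(𝔤)` is a symmetric skew-Berger algebra, i.e. `𝓡̄^∇(𝔤) = 0`: every trilinear
`S : V×V×V → End(V)` such that each `S_x` is a skew-curvature tensor of type `𝔤` and
`S_x(y,z) + S_y(z,x) + S_z(x,y) = 0` vanishes. -/
theorem stmt17 {V : Type*} [AddCommGroup V] [Module ℂ V] [FiniteDimensional ℂ V]
    (g : LieSubalgebra ℂ (Module.End ℂ V))
    (hirr : ∀ W : Submodule ℂ V, (∀ A ∈ g, ∀ w ∈ W, A w ∈ W) → W = ⊥ ∨ W = ⊤)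
    (hBerger : IsSkewBerger g.toSubmodule)
    (hann : ∀ A ∈ g, ∀ R : V →ₗ[ℂ] V →ₗ[ℂ] Module.End ℂ V,
      IsSkewCurv g.toSubmodule R →
      ∀ x y : V, ⁅A, R x y⁆ = R (A x) y + R x (A y)) :
    ∀ S : V →ₗ[ℂ] V →ₗ[ℂ] V →ₗ[ℂ] Module.End ℂ V,
      (∀ x : V, IsSkewCurv g.toSubmodule (S x)) →
      (∀ x y z : V, S x y z + S y z x + S z x y = 0) →
      S = 0 :=
  stmt17_general g hirr hann
end

section
/- Let n ≥ 3, let U be a complex vector space of dimension n with a nondegenerate symmetric bilinear form B, let W be a finite-dimensional complex vector space, and let τ : (U ⊗ W) × (U ⊗ W) → ℂ be a bilinear form such that for all x₁, u₁, v₁, z₁ ∈ U and x₂, u₂ ∈ W: 0 = τ(x₁⊗x₂, v₁⊗u₂)B(u₁,z₁) + τ(u₁⊗u₂, v₁⊗x₂)B(x₁,z₁) + τ(x₁⊗x₂, z₁⊗u₂)B(v₁,u₁) + τ(u₁⊗u₂, z₁⊗x₂)B(v₁,x₁) − τ(x₁⊗x₂, u₁⊗u₂)B(v₁,z₁) − τ(u₁⊗u₂,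 x₁⊗x₂)B(v₁,z₁). Then there exists an alternating bilinear form w on W such that τ(x₁⊗x₂, u₁⊗u₂) = B(x₁,u₁)·w(x₂,u₂) for all x₁, u₁ ∈ U and x₂, u₂ ∈ W. -/
/-!
Write `σ_{a,c}(x, u) = τ(x ⊗ a, u ⊗ c)`, a bilinear form on `U`, and contract identities
against `B` using a basis and its `B`-dual basis. Contracting the hypothesis in `(v, z)` gives
`(2 - n) (σ_{a,c}(x, u) + σ_{c,a}(u, x)) = 0`, so `τ` is antisymmetric under the full swap.
Substituting this back and contracting in `(u, z)` shows that `σ_{a,c}` is symmetric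
(as `n + 2 ≠ 0`) and that `n σ_{a,c} = (tr_B σ_{a,c}) B`. Hence `w(a, c) = tr_B σ_{a,c} / n`
works; it is alternating because `σ_{a,a}` is both symmetric and antisymmetric.
-/

open TensorProduct

namespace LinearMap.BilinForm

variable {K U ι : Type*} [Field K] [AddCommGroup U] [Module K U] [Fintype ι] [DecidableEq ι]
  {B : LinearMap.BilinForm K U}

theorem sum_apply_dualBasis_mul_apply_basis (hB : B.Nondegenerate) (b : Module.Basis ι K U)
    (ψ : Module.Dual K U) (u : U) :
    ∑ i, ψ (B.dualBasis hB b i) * B u (b i) = ψ u := by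
  conv_rhs => rw [← (B.dualBasis hB b).sum_repr u]
  simp [mul_comm]

theorem sum_apply_basis_mul_apply_dualBasis (hB : B.Nondegenerate) (b : Module.Basis ι K U)
    (ψ : Module.Dual K U) (u : U) :
    ∑ i, ψ (b i) * B (B.dualBasis hB b i) u = ψ u := by
  simpa using sum_apply_dualBasis_mul_apply_basis hB.flip (B.dualBasis hB b) ψ u

theorem sum_apply_dualBasis_basis (hB : B.Nondegenerate) (b : Module.Basis ι K U) :
    ∑ i, B (B.dualBasis hB b i) (b i) = Module.finrank K U := by
  simp [apply_dualBasis_left, Module.finrank_eq_card_basis b]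

/-- For `σ = τ (· ⊗ₜ a) (· ⊗ₜ c)` and `σ' = τ (· ⊗ₜ c) (· ⊗ₜ a)` this is the hypothesis
on `τ`. -/
def SixTermIdentity (B σ σ' : LinearMap.BilinForm K U) : Prop :=
  ∀ x u v z : U, 0 = σ x v * B u z + σ' u v * B x z + σ x z * B v u + σ' u z * B v x
    - σ x u * B v z - σ' u x * B v z

def FourTermIdentity (B σ : LinearMap.BilinForm K U) : Prop :=
  ∀ x u v z : U, 0 = σ x v * B u z - σ v u * B x z + σ x z * B v u - σ z u * B v x

variable {σ σ' : LinearMap.BilinForm K U}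

theorem FourTermIdentity.contract (h : FourTermIdentity B σ) (hB : B.Nondegenerate)
    (hBs : B.IsSymm) (b : Module.Basis ι K U) (x v : U) :
    0 = Module.finrank K U * σ x v - σ v x + σ x v
      - (∑ i, σ (b i) (B.dualBasis hB b i)) * B x v := by
  -- contract `u` with `z`
  have hsum := Finset.sum_eq_zero fun i (_ : i ∈ Finset.univ) =>
    (h x (B.dualBasis hB b i) v (b i)).symm
  simp only [Finset.sum_sub_distrib, Finset.sum_add_distrib, ← Finset.mul_sum, ← Finset.sum_mul,
    sum_apply_dualBasis_mul_apply_basis, hBs.eq v, sum_apply_basis_mul_apply_dualBasis,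
    sum_apply_dualBasis_basis] at hsum
  linear_combination -hsum

variable [FiniteDimensional K U]

theorem SixTermIdentity.apply_swap_eq_neg (h : SixTermIdentity B σ σ')
    (hB : B.Nondegenerate) (hn : (Module.finrank K U : K) ≠ 2) (x u : U) : σ' u x = -σ x u := by
  let b := Module.finBasis K U
  -- contract `v` with `z`
  have hsum := Finset.sum_eq_zero fun i (_ : i ∈ Finset.univ) =>
    (h x u (B.dualBasis hB b i) (b i)).symm
  simp only [Finset.sum_sub_distrib, Finset.sum_add_distrib, ← Finset.mul_sum,
    sum_apply_dualBasis_mul_apply_basis, sum_apply_basis_mul_apply_dualBasis,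
    sum_apply_dualBasis_basis] at hsum
  have key : (σ x u + σ' u x) * (2 - Module.finrank K U) = 0 := by linear_combination hsum
  linear_combination (mul_eq_zero.mp key).resolve_right (sub_ne_zero.mpr hn.symm)

theorem SixTermIdentity.fourTermIdentity (h : SixTermIdentity B σ σ')
    (hB : B.Nondegenerate) (hn : (Module.finrank K U : K) ≠ 2) : FourTermIdentity B σ := by
  intro x u v z
  have := h x u v z
  rw [h.apply_swap_eq_neg hB hn v u, h.apply_swap_eq_neg hB hn z u,
    h.apply_swap_eq_neg hB hn x u] at this
  linear_combination this

theorem FourTermIdentity.isSymm (h : FourTermIdentity B σ)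
    (hB : B.Nondegenerate) (hBs : B.IsSymm) (hn : (Module.finrank K U : K) + 2 ≠ 0) :
    σ.IsSymm := by
  refine ⟨fun x v => ?_⟩
  let b := Module.finBasis K U
  have key : (σ x v - σ v x) * (Module.finrank K U + 2) = 0 := by
    linear_combination h.contract hB hBs b v x - h.contract hB hBs b x v
      - (∑ i, σ (b i) (B.dualBasis hB b i)) * hBs.eq v x
  exact sub_eq_zero.mp ((mul_eq_zero.mp key).resolve_right hn)

theorem FourTermIdentity.finrank_mul_apply (h : FourTermIdentity B σ)
    (hB : B.Nondegenerate) (hBs : B.IsSymm) (hn : (Module.finrank K U : K) + 2 ≠ 0)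
    (b : Module.Basis ι K U) (x v : U) :
    Module.finrank K U * σ x v = (∑ i, σ (b i) (B.dualBasis hB b i)) * B x v := by
  linear_combination -h.contract hB hBs b x v + (h.isSymm hB hBs hn).eq v x

end LinearMap.BilinForm

open LinearMap.BilinForm

theorem stmt19_general {U W : Type*}
    [AddCommGroup U] [Module ℂ U] [FiniteDimensional ℂ U]
    [AddCommGroup W] [Module ℂ W]
    (n : ℕ) (hn : 3 ≤ n) (hdimU : Module.finrank ℂ U = n)
    (B : U →ₗ[ℂ] U →ₗ[ℂ] ℂ)
    (hBsymm : ∀ x y : U, B x y = B y x)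
    (hBnd : ∀ x : U, (∀ y : U, B x y = 0) → x = 0)
    (τ : (U ⊗[ℂ] W) →ₗ[ℂ] (U ⊗[ℂ] W) →ₗ[ℂ] ℂ)
    (hτ : ∀ (x₁ u₁ v₁ z₁ : U) (x₂ u₂ : W),
      0 = τ (x₁ ⊗ₜ[ℂ] x₂) (v₁ ⊗ₜ[ℂ] u₂) * B u₁ z₁
        + τ (u₁ ⊗ₜ[ℂ] u₂) (v₁ ⊗ₜ[ℂ] x₂) * B x₁ z₁
        + τ (x₁ ⊗ₜ[ℂ] x₂) (z₁ ⊗ₜ[ℂ] u₂) * B v₁ u₁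
        + τ (u₁ ⊗ₜ[ℂ] u₂) (z₁ ⊗ₜ[ℂ] x₂) * B v₁ x₁
        - τ (x₁ ⊗ₜ[ℂ] x₂) (u₁ ⊗ₜ[ℂ] u₂) * B v₁ z₁
        - τ (u₁ ⊗ₜ[ℂ] u₂) (x₁ ⊗ₜ[ℂ] x₂) * B v₁ z₁) :
    ∃ w : W →ₗ[ℂ] W →ₗ[ℂ] ℂ,
      (∀ x : W, w x x = 0) ∧
      ∀ (x₁ u₁ : U) (x₂ u₂ : W),
        τ (x₁ ⊗ₜ[ℂ] x₂) (u₁ ⊗ₜ[ℂ] u₂) = B x₁ u₁ * w x₂ u₂ := by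
  have hBs : IsSymm B := ⟨hBsymm⟩
  have hB : B.Nondegenerate := hBs.isRefl.nondegenerate_iff_separatingLeft.mpr hBnd
  have hn_ne_zero : (n : ℂ) ≠ 0 := by exact_mod_cast (by omega : n ≠ 0)
  have hn_ne_two : (Module.finrank ℂ U : ℂ) ≠ 2 := by
    rw [hdimU]; exact_mod_cast (by omega : n ≠ 2)
  have hn_add_two : (Module.finrank ℂ U : ℂ) + 2 ≠ 0 := by
    exact_mod_cast (by omega : n + 2 ≠ 0)
  let b := Module.finBasisOfFinrankEq ℂ U hdimU
  let σ (a c : W) : LinearMap.BilinForm ℂ U :=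
    τ.compl₁₂ ((mk ℂ U W).flip a) ((mk ℂ U W).flip c)
  have hσ (a c : W) : SixTermIdentity B (σ a c) (σ c a) := fun x u v z => hτ x u v z a c
  let w : W →ₗ[ℂ] W →ₗ[ℂ] ℂ :=
    (n : ℂ)⁻¹ • ∑ i, τ.compl₁₂ (mk ℂ U W (b i)) (mk ℂ U W (dualBasis B hB b i))
  have hw (a c : W) : w a c = (n : ℂ)⁻¹ * ∑ i, σ a c (b i) (dualBasis B hB b i) := by
    simp [w, σ]
  refine ⟨w, fun a => ?_, fun x u a c => ?_⟩
  · have hσaa (x v : U) : σ a a x v = 0 := by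
      have := (hσ a a).apply_swap_eq_neg hB hn_ne_two v x
      rwa [(((hσ a a).fourTermIdentity hB hn_ne_two).isSymm hB hBs hn_add_two).eq v x,
        self_eq_neg] at this
    simp [hw, hσaa]
  · have := ((hσ a c).fourTermIdentity hB hn_ne_two).finrank_mul_apply hB hBs hn_add_two b x u
    rw [hdimU] at this
    change σ a c x u = B x u * w a c
    rw [hw]
    field_simp
    linear_combination this

/-- for `U` of dimension `n ≥ 3` with a nondegenerate symmetric
bilinear form `B`, a finite-dimensional `W`, and a bilinear form `τ` on `U ⊗ W`
satisfying, on decomposable vectors, the identity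
`0 = τ(x₁⊗x₂, v₁⊗u₂)B(u₁,z₁) + τ(u₁⊗u₂, v₁⊗x₂)B(x₁,z₁) + τ(x₁⊗x₂, z₁⊗u₂)B(v₁,u₁)
   + τ(u₁⊗u₂, z₁⊗x₂)B(v₁,x₁) − τ(x₁⊗x₂, u₁⊗u₂)B(v₁,z₁) − τ(u₁⊗u₂, x₁⊗x₂)B(v₁,z₁)`,
there is an alternating bilinear form `w` on `W` with
`τ(x₁⊗x₂, u₁⊗u₂) = B(x₁,u₁)·w(x₂,u₂)`. -/
theorem stmt19 {U W : Type*}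
    [AddCommGroup U] [Module ℂ U] [FiniteDimensional ℂ U]
    [AddCommGroup W] [Module ℂ W] [FiniteDimensional ℂ W]
    (n : ℕ) (hn : 3 ≤ n) (hdimU : Module.finrank ℂ U = n)
    (B : U →ₗ[ℂ] U →ₗ[ℂ] ℂ)
    (hBsymm : ∀ x y : U, B x y = B y x)
    (hBnd : ∀ x : U, (∀ y : U, B x y = 0) → x = 0)
    (τ : (U ⊗[ℂ] W) →ₗ[ℂ] (U ⊗[ℂ] W) →ₗ[ℂ] ℂ)
    (hτ : ∀ (x₁ u₁ v₁ z₁ : U) (x₂ u₂ : W),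
      0 = τ (x₁ ⊗ₜ[ℂ] x₂) (v₁ ⊗ₜ[ℂ] u₂) * B u₁ z₁
        + τ (u₁ ⊗ₜ[ℂ] u₂) (v₁ ⊗ₜ[ℂ] x₂) * B x₁ z₁
        + τ (x₁ ⊗ₜ[ℂ] x₂) (z₁ ⊗ₜ[ℂ] u₂) * B v₁ u₁
        + τ (u₁ ⊗ₜ[ℂ] u₂) (z₁ ⊗ₜ[ℂ] x₂) * B v₁ x₁
        - τ (x₁ ⊗ₜ[ℂ] x₂) (u₁ ⊗ₜ[ℂ] u₂) * B v₁ z₁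
        - τ (u₁ ⊗ₜ[ℂ] u₂) (x₁ ⊗ₜ[ℂ] x₂) * B v₁ z₁) :
    ∃ w : W →ₗ[ℂ] W →ₗ[ℂ] ℂ,
      (∀ x : W, w x x = 0) ∧
      ∀ (x₁ u₁ : U) (x₂ u₂ : W),
        τ (x₁ ⊗ₜ[ℂ] x₂) (u₁ ⊗ₜ[ℂ] u₂) = B x₁ u₁ * w x₂ u₂ :=
  stmt19_general n hn hdimU B hBsymm hBnd τ hτ
end
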